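/- arXiv:1902.03060 — 9 statements merged into one kernel-verified Lean document; each statement's English description precedes it below -/
import Mathlib

section
/- Let H = { a ∈ Π : ∑_{i∈ι} ‖a(i)‖² < ∞ } be the Hilbert direct sum of the spaces E i (the lp-space of exponent 2 of the family (E i)), with norm ‖a‖ = (∑_{i∈ι} ‖a(i)‖²)^{1/2}. Then the set R = { f ∈ H : there exists u ∈ H with P̂ i(u(i)) = f(i) for all i ∈ ι } (the range of the densely defined operator induced by P on H) is closed in H if and only if there exists C > 0 such that ‖P̂ i φ‖ ≥ C for every i ∈ ι and every φ in the orthogonal complement of ker(P̂ i) in E i with ‖φ‖ = 1. -/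
open scoped ENNReal NNReal

noncomputable section

section Aux


variable {ι : Type*} [Countable ι] (E : ι → Type*)
    [∀ i, NormedAddCommGroup (E i)] [∀ i, InnerProductSpace ℂ (E i)]
    [∀ i, FiniteDimensional ℂ (E i)]

lemma eval_cont (i : ι) : Continuous fun f : lp E 2 => f i := by
  have h : LipschitzWith 1 fun f : lp E 2 => f i := by
    refine LipschitzWith.of_dist_le_mul fun f g => ?_
    simp only [NNReal.coe_one, one_mul, dist_eq_norm]
    have : f i - g i = (f - g) i := by rw [lp.coeFn_sub]; rfl
    rw [this]
    exact lp.norm_apply_le_norm (by norm_num) (f - g) i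
  exact h.continuous

-- direction ⇐ : bound implies closed
lemma dir2 (Ph : ∀ i, E i →ₗ[ℂ] E i) (C : ℝ) (hC : 0 < C)
    (hbd : ∀ (i : ι), ∀ φ ∈ (LinearMap.ker (Ph i))ᗮ, ‖φ‖ = 1 → C ≤ ‖Ph i φ‖) :
    IsClosed {f : lp E 2 | ∃ u : lp E 2, ∀ i, Ph i (u i) = f i} := by
  have hset : {f : lp E 2 | ∃ u : lp E 2, ∀ i, Ph i (u i) = f i}
      = ⋂ i, (fun f : lp E 2 => f i) ⁻¹' (LinearMap.range (Ph i) : Set (E i)) := by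
    ext f
    simp only [Set.mem_setOf_eq, Set.mem_iInter, Set.mem_preimage, SetLike.mem_coe,
      LinearMap.mem_range]
    constructor
    · rintro ⟨u, hu⟩ i; exact ⟨u i, hu i⟩
    · intro h
      choose v hv using h
      set u : ∀ i, E i := fun i =>
        v i - (Submodule.orthogonalProjection (LinearMap.ker (Ph i)) (v i) : E i) with hu_def
      have hu : ∀ i, Ph i (u i) = f i := by
        intro i
        have hk : ((Submodule.orthogonalProjection (LinearMap.ker (Ph i)) (v i) : E i))
            ∈ LinearMap.ker (Ph i) := (Submodule.orthogonalProjection _ (v i)).2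
        rw [hu_def]
        simp only [map_sub, LinearMap.mem_ker.mp hk, sub_zero, hv i]
      have humem : ∀ i, u i ∈ (LinearMap.ker (Ph i))ᗮ :=
        fun i => Submodule.sub_starProjection_mem_orthogonal (K := LinearMap.ker (Ph i)) (v i)
      have hle : ∀ i, ‖u i‖ ≤ C⁻¹ * ‖f i‖ := by
        intro i
        rcases eq_or_ne (u i) 0 with h0 | h0
        · rw [h0, norm_zero]; positivity
        · have hn0 : (0:ℝ) < ‖u i‖ := norm_pos_iff.2 h0
          have h1 : ((‖u i‖⁻¹ : ℝ) : ℂ) • u i ∈ (LinearMap.ker (Ph i))ᗮ :=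
            Submodule.smul_mem _ _ (humem i)
          have h2 : ‖((‖u i‖⁻¹ : ℝ) : ℂ) • u i‖ = 1 := by
            rw [norm_smul]
            simp [abs_of_pos (inv_pos.2 hn0), inv_mul_cancel₀ hn0.ne']
          have h3 := hbd i _ h1 h2
          rw [map_smul, norm_smul] at h3
          simp only [Complex.norm_real, Real.norm_eq_abs, abs_of_pos (inv_pos.2 hn0)] at h3
          rw [hu i] at h3
          have h4 : C * ‖u i‖ ≤ ‖(f : ∀ j, E j) i‖ := by
            have h5 := mul_le_mul_of_nonneg_right h3 hn0.le
            calc C * ‖u i‖ ≤ ‖u i‖⁻¹ * ‖(f : ∀ j, E j) i‖ * ‖u i‖ := h5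
              _ = ‖(f : ∀ j, E j) i‖ := by field_simp
          calc ‖u i‖ = C⁻¹ * (C * ‖u i‖) := by field_simp
            _ ≤ C⁻¹ * ‖(f : ∀ j, E j) i‖ :=
                mul_le_mul_of_nonneg_left h4 (inv_pos.2 hC).le
      have hmem : Memℓp u 2 := by
        apply memℓp_gen
        have hf2 : Summable fun i => ‖((C⁻¹:ℝ) • (f : ∀ j, E j)) i‖ ^ (2:ℝ≥0∞).toReal :=
          ((lp.memℓp f).const_smul (C⁻¹:ℝ)).summable (by norm_num)
        refine Summable.of_nonneg_of_le (fun i => by positivity) (fun i => ?_) hf2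
        refine Real.rpow_le_rpow (norm_nonneg _) ?_ (by norm_num)
        simpa [norm_smul, abs_of_pos hC, abs_of_pos (inv_pos.2 hC)] using hle i
      exact ⟨⟨u, hmem⟩, hu⟩
  rw [hset]
  refine isClosed_iInter fun i => ?_
  exact ((LinearMap.range (Ph i)).closed_of_finiteDimensional).preimage (eval_cont E i)

lemma dir1 (Ph : ∀ i, E i →ₗ[ℂ] E i)
    (hclosed : IsClosed {f : lp E 2 | ∃ u : lp E 2, ∀ i, Ph i (u i) = f i})
    (hC : ∀ C : ℝ, 0 < C → ∃ i, ∃ φ ∈ (LinearMap.ker (Ph i))ᗮ, ‖φ‖ = 1 ∧ ‖Ph i φ‖ < C) :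
    False := by
  classical
  haveI : ∀ i, CompleteSpace (E i) := fun i => FiniteDimensional.complete ℂ (E i)
  haveI : ∀ i, ProperSpace (E i) := fun i => FiniteDimensional.proper ℂ (E i)
  -- Step 1: the minimum of ‖Ph i φ‖ on the unit sphere of (ker (Ph i))ᗮ
  have hmin : ∀ i : ι, ∃ ε : ℝ, 0 < ε ∧
      (∀ φ ∈ (LinearMap.ker (Ph i))ᗮ, ‖φ‖ = 1 → ε ≤ ‖Ph i φ‖) ∧
      (ε < 1 → ∃ φ ∈ (LinearMap.ker (Ph i))ᗮ, ‖φ‖ = 1 ∧ ‖Ph i φ‖ = ε) := by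
    intro i
    by_cases hS : ∃ φ₀, φ₀ ∈ (LinearMap.ker (Ph i))ᗮ ∧ ‖φ₀‖ = 1
    · set S : Set (E i) := {φ | φ ∈ (LinearMap.ker (Ph i))ᗮ ∧ ‖φ‖ = 1} with hSdef
      have hSne : S.Nonempty := hS
      have hScpt : IsCompact S := by
        have hEq : S = ((LinearMap.ker (Ph i))ᗮ : Set (E i)) ∩ Metric.sphere 0 1 := by
          ext φ
          simp [hSdef, Set.mem_inter_iff, mem_sphere_iff_norm]
        rw [hEq]
        exact (isCompact_sphere (0 : E i) 1).inter_left
          ((LinearMap.ker (Ph i))ᗮ).closed_of_finiteDimensional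
      have hcont : Continuous fun φ : E i => ‖Ph i φ‖ :=
        ((Ph i).continuous_of_finiteDimensional).norm
      obtain ⟨φ₀, hφ₀S, hφ₀min⟩ := hScpt.exists_isMinOn hSne hcont.continuousOn
      refine ⟨‖Ph i φ₀‖, ?_, ?_, ?_⟩
      · rw [norm_pos_iff]
        intro h0
        have hk : φ₀ ∈ LinearMap.ker (Ph i) := LinearMap.mem_ker.2 h0
        have hz : (inner ℂ φ₀ φ₀ : ℂ) = 0 :=
          (Submodule.mem_orthogonal _ _).1 hφ₀S.1 φ₀ hk
        have h00 : φ₀ = 0 := inner_self_eq_zero.1 hz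
        have h2 := hφ₀S.2
        rw [h00, norm_zero] at h2
        exact zero_ne_one h2
      · exact fun φ hφ hn => hφ₀min ⟨hφ, hn⟩
      · exact fun _ => ⟨φ₀, hφ₀S.1, hφ₀S.2, rfl⟩
    · refine ⟨1, one_pos, fun φ hφ hn => ?_, fun h => absurd h (lt_irrefl 1)⟩
      exact absurd (⟨φ, hφ, hn⟩ : ∃ φ₀ ∈ (LinearMap.ker (Ph i))ᗮ, ‖φ₀‖ = 1) hS
  choose ε hε0 hεlb hεatt using hmin
  -- Step 2
  have step2 : ∀ C : ℝ, 0 < C → ∃ i, ε i < C := by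
    intro C hCpos
    obtain ⟨i, φ, h1, h2, h3⟩ := hC C hCpos
    exact ⟨i, lt_of_le_of_lt (hεlb i φ h1 h2) h3⟩
  -- Step 3 : the set of indices with small ε is infinite
  have step3 : ∀ C : ℝ, 0 < C → {i | ε i < C}.Infinite := by
    intro C hCpos hfin
    have hne : {i | ε i < C}.Nonempty := by
      obtain ⟨i, hi⟩ := step2 C hCpos; exact ⟨i, hi⟩
    have hFne : hfin.toFinset.Nonempty := by
      rwa [Set.Finite.toFinset_nonempty]
    set δ := min C (hfin.toFinset.inf' hFne ε) with hδdef
    have hδpos : 0 < δ :=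
      lt_min hCpos ((Finset.lt_inf'_iff hFne).2 fun j _ => hε0 j)
    obtain ⟨j, hj⟩ := step2 δ hδpos
    have hjF : j ∈ hfin.toFinset := by
      rw [Set.Finite.mem_toFinset]
      exact lt_of_lt_of_le hj (min_le_left _ _)
    exact absurd hj (not_lt.2 (le_trans (min_le_right _ _) (Finset.inf'_le ε hjF)))
  -- Step 4 : extract an injective sequence of indices
  have key : ∀ (s : Finset ι) (n : ℕ), ∃ i, i ∉ s ∧ ε i < (2:ℝ)⁻¹ ^ n := by
    intro s n
    have h1 : ({i | ε i < (2:ℝ)⁻¹ ^ n} \ (s : Set ι)).Infinite :=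
      (step3 _ (by positivity)).diff s.finite_toSet
    obtain ⟨i, hi⟩ := h1.nonempty
    exact ⟨i, fun h => hi.2 h, hi.1⟩
  let g : ℕ → ι × Finset ι := fun n => Nat.rec
    ((key ∅ 0).choose, {(key ∅ 0).choose})
    (fun n p => ((key p.2 (n+1)).choose, insert ((key p.2 (n+1)).choose) p.2)) n
  set ψ : ℕ → ι := fun n => (g n).1 with hψdef
  have hψε : ∀ n, ε (ψ n) < (2:ℝ)⁻¹ ^ n := by
    intro n
    cases n with
    | zero => exact (key ∅ 0).choose_spec.2
    | succ n => exact (key (g n).2 (n+1)).choose_spec.2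
  have hmemself : ∀ n, ψ n ∈ (g n).2 := by
    intro n
    cases n with
    | zero => exact Finset.mem_singleton_self _
    | succ n => exact Finset.mem_insert_self _ _
  have hmono : ∀ m n, m ≤ n → (g m).2 ⊆ (g n).2 := by
    intro m n h
    induction n with
    | zero => rw [Nat.le_zero.1 h]
    | succ n ih =>
      rcases Nat.lt_or_ge m (n+1) with h' | h'
      · exact (ih (Nat.lt_succ_iff.1 h')).trans (Finset.subset_insert _ _)
      · rw [Nat.le_antisymm h h']
  have hnotmem : ∀ n, ψ (n+1) ∉ (g n).2 := fun n => (key (g n).2 (n+1)).choose_spec.1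
  have hinj : Function.Injective ψ := by
    have hlt : ∀ m n, m < n → ψ m ≠ ψ n := by
      intro m n hmn heq
      obtain ⟨k, rfl⟩ : ∃ k, n = k + 1 :=
        ⟨n - 1, (Nat.succ_pred_eq_of_pos (lt_of_le_of_lt (Nat.zero_le m) hmn)).symm⟩
      exact hnotmem k (heq ▸ hmono m k (Nat.lt_succ_iff.1 hmn) (hmemself m))
    intro a b hab
    rcases lt_trichotomy a b with h | h | h
    · exact absurd hab (hlt a b h)
    · exact h
    · exact absurd hab.symm (hlt b a h)
  -- Step 5 : unit vectors realizing the minima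
  have hφex : ∀ n, ∃ φ ∈ (LinearMap.ker (Ph (ψ n)))ᗮ, ‖φ‖ = 1 ∧ ‖Ph (ψ n) φ‖ < (2:ℝ)⁻¹ ^ n := by
    intro n
    have h1 : ε (ψ n) < 1 := by
      refine lt_of_lt_of_le (hψε n) ?_
      calc (2:ℝ)⁻¹ ^ n ≤ 1 ^ n := pow_le_pow_left₀ (by norm_num) (by norm_num) n
        _ = 1 := one_pow n
    obtain ⟨φ, hm, hn1, he⟩ := hεatt (ψ n) h1
    exact ⟨φ, hm, hn1, he ▸ hψε n⟩
  choose φ hφmem hφnorm hφlt using hφex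
  -- Step 6 : the bad element f
  have hnormsingle : ∀ n, ‖(lp.single 2 (ψ n) (Ph (ψ n) (φ n)) : lp E 2)‖ = ‖Ph (ψ n) (φ n)‖ := by
    intro n
    simpa using lp.norm_single (p := 2) (E := E) (by norm_num)
      (Pi.single (ψ n) (Ph (ψ n) (φ n))) (ψ n)
  have hsum : Summable (fun n => (lp.single 2 (ψ n) (Ph (ψ n) (φ n)) : lp E 2)) := by
    have hgeo : Summable (fun n : ℕ => (2:ℝ)⁻¹ ^ n) :=
      summable_geometric_of_lt_one (by norm_num) (by norm_num)
    refine Summable.of_norm (Summable.of_nonneg_of_le (fun n => norm_nonneg _) (fun n => ?_) hgeo)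
    rw [hnormsingle n]
    exact (hφlt n).le
  set f : lp E 2 := ∑' n, (lp.single 2 (ψ n) (Ph (ψ n) (φ n)) : lp E 2) with hfdef
  have hhs : HasSum (fun n => (lp.single 2 (ψ n) (Ph (ψ n) (φ n)) : lp E 2)) f := hsum.hasSum
  -- Step 7 : f belongs to the range set (since the latter is closed)
  have hcl : f ∈ {f : lp E 2 | ∃ u : lp E 2, ∀ i, Ph i (u i) = f i} := by
    refine hclosed.closure_subset (mem_closure_of_tendsto hhs ?_)
    filter_upwards with s
    refine ⟨∑ n ∈ s, lp.single 2 (ψ n) (φ n), fun i => ?_⟩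
    have hL : ((∑ n ∈ s, lp.single 2 (ψ n) (φ n) : lp E 2) : ∀ j, E j) i
        = ∑ n ∈ s, (lp.single 2 (ψ n) (φ n) : lp E 2) i := by
      rw [lp.coeFn_sum, Finset.sum_apply]
    have hR : ((∑ n ∈ s, lp.single 2 (ψ n) (Ph (ψ n) (φ n)) : lp E 2) : ∀ j, E j) i
        = ∑ n ∈ s, (lp.single 2 (ψ n) (Ph (ψ n) (φ n)) : lp E 2) i := by
      rw [lp.coeFn_sum, Finset.sum_apply]
    rw [hL, hR, map_sum]
    refine Finset.sum_congr rfl fun n _ => ?_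
    by_cases h : i = ψ n
    · subst h
      rw [lp.single_apply_self, lp.single_apply_self]
    · rw [lp.single_apply_ne _ _ _ h, lp.single_apply_ne _ _ _ h, map_zero]
  -- Step 8 : compute components of f
  have hfψ : ∀ m, (f : ∀ j, E j) (ψ m) = Ph (ψ m) (φ m) := by
    intro m
    have h1 : HasSum (fun n => (lp.single 2 (ψ n) (Ph (ψ n) (φ n)) : lp E 2) (ψ m))
        ((f : ∀ j, E j) (ψ m)) :=
      hhs.map (AddMonoidHom.mk' (fun g : lp E 2 => g (ψ m))
        (fun a b => congrFun (lp.coeFn_add a b) (ψ m))) (eval_cont E (ψ m))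
    have h2 : HasSum (fun n => (lp.single 2 (ψ n) (Ph (ψ n) (φ n)) : lp E 2) (ψ m))
        ((lp.single 2 (ψ m) (Ph (ψ m) (φ m)) : lp E 2) (ψ m)) := by
      refine hasSum_single m fun n hn => ?_
      exact lp.single_apply_ne 2 (ψ n) _ (fun h => hn (hinj h.symm))
    rw [h1.unique h2, lp.single_apply_self]
  -- Step 9 : contradiction
  obtain ⟨u, hu⟩ := hcl
  have hub : ∀ m, (1:ℝ) ≤ ‖(u : ∀ j, E j) (ψ m)‖ := by
    intro m
    have hker : (u : ∀ j, E j) (ψ m) - φ m ∈ LinearMap.ker (Ph (ψ m)) := by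
      rw [LinearMap.mem_ker, map_sub, hu (ψ m), hfψ m, sub_self]
    have hz : (inner ℂ ((u : ∀ j, E j) (ψ m) - φ m) (φ m) : ℂ) = 0 :=
      (Submodule.mem_orthogonal _ _).1 (hφmem m) _ hker
    have h4 : (inner ℂ (φ m) (φ m) : ℂ) = 1 := by
      rw [inner_self_eq_norm_sq_to_K, hφnorm m]
      norm_num
    have h2 : (inner ℂ ((u : ∀ j, E j) (ψ m)) (φ m) : ℂ) = 1 := by
      have h3 := inner_sub_left (𝕜 := ℂ) ((u : ∀ j, E j) (ψ m)) (φ m) (φ m)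
      rw [hz, h4] at h3
      linear_combination -h3
    calc (1:ℝ) = ‖(inner ℂ ((u : ∀ j, E j) (ψ m)) (φ m) : ℂ)‖ := by rw [h2]; norm_num
      _ ≤ ‖(u : ∀ j, E j) (ψ m)‖ * ‖φ m‖ := norm_inner_le_norm _ _
      _ = ‖(u : ∀ j, E j) (ψ m)‖ := by rw [hφnorm m, mul_one]
  have hus : Summable fun i => ‖(u : ∀ j, E j) i‖ ^ (2:ℝ≥0∞).toReal :=
    (lp.memℓp u).summable (by norm_num)
  have hfin : {i : ι | 1 ≤ ‖(u : ∀ j, E j) i‖ ^ (2:ℝ≥0∞).toReal}.Finite := by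
    have h1 : ∀ᶠ i in Filter.cofinite, ‖(u : ∀ j, E j) i‖ ^ (2:ℝ≥0∞).toReal < 1 :=
      hus.tendsto_cofinite_zero.eventually_lt_const one_pos
    simpa [not_lt] using Filter.eventually_cofinite.mp h1
  have hsub : Set.range ψ ⊆ {i : ι | 1 ≤ ‖(u : ∀ j, E j) i‖ ^ (2:ℝ≥0∞).toReal} := by
    rintro _ ⟨m, rfl⟩
    have h2t : ((2:ℝ≥0∞).toReal) = (2:ℝ) := by norm_num
    simp only [Set.mem_setOf_eq, h2t]
    exact Real.one_le_rpow (hub m) (by norm_num)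
  exact ((Set.infinite_range_of_injective hinj).mono hsub) hfin

end Aux

/-- Let `H = lp E 2` be the Hilbert direct sum of the spaces `E i`. The range
`R = {f ∈ H | ∃ u ∈ H, P̂ i (u i) = f i for all i}` of the densely defined operator
induced by the componentwise operator `P` is closed in `H` if and only if there is a
uniform lower bound `C > 0` for `‖P̂ i φ‖` over all `i` and all unit vectors `φ` in the
orthogonal complement of `ker (P̂ i)` in `E i`. -/
theorem statement_7 {ι : Type*} [Countable ι] (E : ι → Type*)
    [∀ i, NormedAddCommGroup (E i)] [∀ i, InnerProductSpace ℂ (E i)]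
    [∀ i, FiniteDimensional ℂ (E i)]
    (Ph : ∀ i, E i →ₗ[ℂ] E i) :
    IsClosed {f : lp E 2 | ∃ u : lp E 2, ∀ i, Ph i (u i) = f i} ↔
      ∃ C > 0, ∀ (i : ι), ∀ φ ∈ (LinearMap.ker (Ph i))ᗮ, ‖φ‖ = 1 → C ≤ ‖Ph i φ‖ := by
  constructor
  · intro hclosed
    by_contra hc
    push_neg at hc
    exact dir1 E Ph hclosed hc
  · rintro ⟨C, hC, hbd⟩
    exact dir2 E Ph C hC hbd
end
end

section
/- Assume that condition S(ρ) holds for every ρ > 0. Then a ∈ Π belongs to D_{{ω}} if and only if there exist t > 0 and C > 0 such that ‖a(i)‖ ≤ C e^{−tω(i)} for all i ∈ ι. -/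
noncomputable section

variable {ι : Type*}

/-- The weighted space `D_{ω,t}` of families with `∑ e^{2tω(i)} ‖a i‖² < ∞`. -/
def Dwt (E : ι → Type*) [∀ i, NormedAddCommGroup (E i)] (ω : ι → ℝ) (t : ℝ) :
    Set (∀ i, E i) :=
  {a | Summable fun i => Real.exp (2 * t * ω i) * ‖a i‖ ^ 2}

/-- `D_{(ω)} = ⋂_{t>0} D_{ω,t}`. -/
def Dbeu (E : ι → Type*) [∀ i, NormedAddCommGroup (E i)] (ω : ι → ℝ) : Set (∀ i, E i) :=
  {a | ∀ t > 0, a ∈ Dwt E ω t}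

/-- `D_{{ω}} = ⋃_{t>0} D_{ω,t}`. -/
def Drou (E : ι → Type*) [∀ i, NormedAddCommGroup (E i)] (ω : ι → ℝ) : Set (∀ i, E i) :=
  {a | ∃ t > 0, a ∈ Dwt E ω t}

/-- `D'_{(ω)} = ⋃_{t>0} D_{ω,-t}`. -/
def Dbeu' (E : ι → Type*) [∀ i, NormedAddCommGroup (E i)] (ω : ι → ℝ) : Set (∀ i, E i) :=
  {a | ∃ t > 0, a ∈ Dwt E ω (-t)}

/-- `D'_{{ω}} = ⋂_{t>0} D_{ω,-t}`. -/
def Drou' (E : ι → Type*) [∀ i, NormedAddCommGroup (E i)] (ω : ι → ℝ) : Set (∀ i, E i) :=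
  {a | ∀ t > 0, a ∈ Dwt E ω (-t)}

theorem statement_9 {ι : Type*} [Countable ι] (E : ι → Type*)
    [∀ i, NormedAddCommGroup (E i)] [∀ i, InnerProductSpace ℂ (E i)]
    [∀ i, FiniteDimensional ℂ (E i)]
    (ω : ι → ℝ) (hω : ∀ i, 0 ≤ ω i)
    (hS : ∀ ρ > (0 : ℝ), Summable fun i => Real.exp (-ρ * ω i))
    (a : ∀ i, E i) :
    a ∈ Drou E ω ↔ ∃ t > 0, ∃ C > 0, ∀ i, ‖a i‖ ≤ C * Real.exp (-t * ω i) := by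
  constructor
  · rintro ⟨t, ht, hsum⟩
    set S := ∑' i, Real.exp (2 * t * ω i) * ‖a i‖ ^ 2 with hS'
    have hSnn : 0 ≤ S := tsum_nonneg fun i => by positivity
    refine ⟨t, ht, Real.sqrt S + 1, by positivity, fun i => ?_⟩
    have hle : Real.exp (2 * t * ω i) * ‖a i‖ ^ 2 ≤ S :=
      Summable.le_tsum hsum i fun j _ => by positivity
    have hna : (0:ℝ) ≤ ‖a i‖ := norm_nonneg _
    have h1 : ‖a i‖ ^ 2 ≤ S * Real.exp (-t * ω i) ^ 2 := by
      have he2 : Real.exp (-t * ω i) ^ 2 = Real.exp (-(2 * t * ω i)) := by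
        rw [sq, ← Real.exp_add]; ring_nf
      rw [he2, Real.exp_neg, ← div_eq_mul_inv, le_div_iff₀ (Real.exp_pos _)]
      linarith [hle]
    calc ‖a i‖ = Real.sqrt (‖a i‖ ^ 2) := (Real.sqrt_sq hna).symm
      _ ≤ Real.sqrt (S * Real.exp (-t * ω i) ^ 2) := Real.sqrt_le_sqrt h1
      _ = Real.sqrt S * Real.exp (-t * ω i) := by
          rw [Real.sqrt_mul hSnn, Real.sqrt_sq (Real.exp_pos _).le]
      _ ≤ (Real.sqrt S + 1) * Real.exp (-t * ω i) := by
          nlinarith [Real.exp_pos (-t * ω i)]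
  · rintro ⟨t, ht, C, hC, hb⟩
    refine ⟨t / 2, by positivity, ?_⟩
    have h := (hS t ht).mul_left (C ^ 2)
    refine Summable.of_nonneg_of_le (fun i => by positivity) (fun i => ?_) h
    have hb' := hb i
    have hna : 0 ≤ ‖a i‖ := norm_nonneg _
    calc Real.exp (2 * (t / 2) * ω i) * ‖a i‖ ^ 2
        ≤ Real.exp (t * ω i) * (C * Real.exp (-t * ω i)) ^ 2 := by
          have h2 : 2 * (t / 2) = t := by ring
          rw [h2]
          gcongr
      _ = C ^ 2 * Real.exp (-t * ω i) := by
          rw [mul_pow, mul_left_comm]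
          congr 1
          rw [sq, ← Real.exp_add, ← Real.exp_add]
          ring_nf
end
end

section
/- (1) If condition S(ρ) holds for some ρ > 0, then a ∈ Π belongs to D'_{(ω)} if and only if there exist t > 0 and C > 0 such that ‖a(i)‖ ≤ C e^{tω(i)} for all i ∈ ι. (2) If condition S(ρ) holds for every ρ > 0, then a ∈ Π belongs to D'_{{ω}} if and only if for every t > 0 there exists C > 0 such that ‖a(i)‖ ≤ C e^{tω(i)} for all i ∈ ι. -/
noncomputable section

variable {ι : Type*}

lemma lemA {ι : Type*} {E : ι → Type*} [∀ i, NormedAddCommGroup (E i)]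
    {ω : ι → ℝ} (t : ℝ) {a : ∀ i, E i}
    (h : Summable fun i => Real.exp (2 * (-t) * ω i) * ‖a i‖ ^ 2) :
    ∃ C > 0, ∀ i, ‖a i‖ ≤ C * Real.exp (t * ω i) := by
  set S := ∑' i, Real.exp (2 * (-t) * ω i) * ‖a i‖ ^ 2 with hSdef
  have hS0 : 0 ≤ S := tsum_nonneg fun i => by positivity
  refine ⟨Real.sqrt (S + 1), by positivity, fun i => ?_⟩
  have hle : Real.exp (2 * (-t) * ω i) * ‖a i‖ ^ 2 ≤ S :=
    Summable.le_tsum h i (fun j _ => by positivity)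
  have hexp : Real.exp (2 * (-t) * ω i) * Real.exp (t * ω i) ^ 2 = 1 := by
    rw [sq, ← Real.exp_add, ← Real.exp_add, ← Real.exp_zero]
    congr 1; ring
  have key : ‖a i‖ ^ 2 ≤ (S + 1) * Real.exp (t * ω i) ^ 2 := by
    have hp := mul_le_mul_of_nonneg_right hle (sq_nonneg (Real.exp (t * ω i)))
    nlinarith [sq_nonneg (Real.exp (t * ω i))]
  calc ‖a i‖ = Real.sqrt (‖a i‖ ^ 2) := (Real.sqrt_sq (norm_nonneg _)).symm
    _ ≤ Real.sqrt ((S + 1) * Real.exp (t * ω i) ^ 2) := Real.sqrt_le_sqrt key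
    _ = Real.sqrt (S + 1) * Real.exp (t * ω i) := by
        rw [Real.sqrt_mul (by positivity), Real.sqrt_sq (Real.exp_nonneg _)]

lemma lemB {ι : Type*} {E : ι → Type*} [∀ i, NormedAddCommGroup (E i)]
    {ω : ι → ℝ} {t ρ C : ℝ} {a : ∀ i, E i}
    (hb : ∀ i, ‖a i‖ ≤ C * Real.exp (t * ω i))
    (hs : Summable fun i => Real.exp (-ρ * ω i)) :
    Summable fun i => Real.exp (2 * (-(t + ρ / 2)) * ω i) * ‖a i‖ ^ 2 := by
  refine Summable.of_nonneg_of_le (fun i => by positivity) (fun i => ?_)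
    (hs.mul_left (C ^ 2))
  have h1 : ‖a i‖ ^ 2 ≤ (C * Real.exp (t * ω i)) ^ 2 :=
    pow_le_pow_left₀ (norm_nonneg _) (hb i) 2
  have h2 : Real.exp (2 * (-(t + ρ / 2)) * ω i) * (C * Real.exp (t * ω i)) ^ 2
      = C ^ 2 * Real.exp (-ρ * ω i) := by
    rw [mul_pow, sq (Real.exp (t * ω i)), ← Real.exp_add,
      show Real.exp (2 * (-(t + ρ / 2)) * ω i) * (C ^ 2 * Real.exp (t * ω i + t * ω i))
        = C ^ 2 * (Real.exp (2 * (-(t + ρ / 2)) * ω i) * Real.exp (t * ω i + t * ω i)) from by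
        ring, ← Real.exp_add]
    congr 1; ring
  calc Real.exp (2 * (-(t + ρ / 2)) * ω i) * ‖a i‖ ^ 2
      ≤ Real.exp (2 * (-(t + ρ / 2)) * ω i) * (C * Real.exp (t * ω i)) ^ 2 :=
        mul_le_mul_of_nonneg_left h1 (Real.exp_nonneg _)
    _ = C ^ 2 * Real.exp (-ρ * ω i) := h2

theorem statement_10 {ι : Type*} [Countable ι] (E : ι → Type*)
    [∀ i, NormedAddCommGroup (E i)] [∀ i, InnerProductSpace ℂ (E i)]
    [∀ i, FiniteDimensional ℂ (E i)]
    (ω : ι → ℝ) (hω : ∀ i, 0 ≤ ω i) :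
    ((∃ ρ > (0 : ℝ), Summable fun i => Real.exp (-ρ * ω i)) →
      ∀ a : ∀ i, E i,
        a ∈ Dbeu' E ω ↔ ∃ t > 0, ∃ C > 0, ∀ i, ‖a i‖ ≤ C * Real.exp (t * ω i)) ∧
    ((∀ ρ > (0 : ℝ), Summable fun i => Real.exp (-ρ * ω i)) →
      ∀ a : ∀ i, E i,
        a ∈ Drou' E ω ↔ ∀ t > 0, ∃ C > 0, ∀ i, ‖a i‖ ≤ C * Real.exp (t * ω i)) := by
  constructor
  · rintro ⟨ρ, hρ, hs⟩ a
    constructor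
    · rintro ⟨t, ht, hsum⟩
      obtain ⟨C, hC, hb⟩ := lemA t hsum
      exact ⟨t, ht, C, hC, hb⟩
    · rintro ⟨t, ht, C, hC, hb⟩
      exact ⟨t + ρ / 2, by linarith, lemB hb hs⟩
  · intro hs a
    constructor
    · intro h t ht
      obtain ⟨C, hC, hb⟩ := lemA t (h t ht)
      exact ⟨C, hC, hb⟩
    · intro h t ht
      obtain ⟨C, hC, hb⟩ := h (t / 2) (by linarith)
      have := lemB hb (hs t ht)
      have he : -(t / 2 + t / 2) = -t := by ring
      rwa [he] at this
end
end

section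
/- Suppose that for some s ∈ ℝ and C > 0 the estimate E(s,C) holds. Then for every u ∈ Π there exists v ∈ ker P (independent of s and C) such that, for every t ∈ ℝ, if P u ∈ D_{ω,t} then u − v ∈ D_{ω,s+t}, and moreover ∑_{i∈ι} e^{2(s+t)ω(i)}‖u(i) − v(i)‖² ≤ C^{−2} ∑_{i∈ι} e^{2tω(i)}‖P̂ i(u(i))‖². -/
noncomputable section

variable {ι : Type*}

section Operator

variable (E : ι → Type*) [∀ i, NormedAddCommGroup (E i)] [∀ i, InnerProductSpace ℂ (E i)]

/-- The componentwise action of the family `P̂` on `Π = ∏ i, E i`. -/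
def pws (Ph : ∀ i, E i →ₗ[ℂ] E i) (u : ∀ i, E i) : ∀ i, E i := fun i => Ph i (u i)

/-- The kernel of the componentwise operator. -/
def kerSet (Ph : ∀ i, E i →ₗ[ℂ] E i) : Set (∀ i, E i) := {v | ∀ i, Ph i (v i) = 0}

/-- The estimate `E(s,C)`: `‖P̂ i φ‖ ≥ C e^{sω(i)}` for all unit vectors `φ` orthogonal to
`ker (P̂ i)`. -/
def Est (Ph : ∀ i, E i →ₗ[ℂ] E i) (ω : ι → ℝ) (s C : ℝ) : Prop :=
  ∀ i, ∀ φ ∈ (LinearMap.ker (Ph i))ᗮ, ‖φ‖ = 1 → C * Real.exp (s * ω i) ≤ ‖Ph i φ‖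

/-- `P` is almost `D_{(ω)}` globally hypoelliptic. -/
def AGHEbeu (Ph : ∀ i, E i →ₗ[ℂ] E i) (ω : ι → ℝ) : Prop :=
  ∀ u ∈ Dbeu' E ω, pws E Ph u ∈ Dbeu E ω → ∃ v ∈ kerSet E Ph, u - v ∈ Dbeu E ω

/-- `P` is almost `D_{{ω}}` globally hypoelliptic. -/
def AGHErou (Ph : ∀ i, E i →ₗ[ℂ] E i) (ω : ι → ℝ) : Prop :=
  ∀ u ∈ Drou' E ω, pws E Ph u ∈ Drou E ω → ∃ v ∈ kerSet E Ph, u - v ∈ Drou E ω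

/-- `P` is almost `D'_{(ω)}` globally hypoelliptic. -/
def AGHEbeu' (Ph : ∀ i, E i →ₗ[ℂ] E i) (ω : ι → ℝ) : Prop :=
  ∀ u : ∀ i, E i, pws E Ph u ∈ Dbeu' E ω → ∃ v ∈ kerSet E Ph, u - v ∈ Dbeu' E ω

/-- `P` is almost `D'_{{ω}}` globally hypoelliptic. -/
def AGHErou' (Ph : ∀ i, E i →ₗ[ℂ] E i) (ω : ι → ℝ) : Prop :=
  ∀ u : ∀ i, E i, pws E Ph u ∈ Drou' E ω → ∃ v ∈ kerSet E Ph, u - v ∈ Drou' E ω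

end Operator

theorem statement_11 {ι : Type*} [Countable ι] (E : ι → Type*)
    [∀ i, NormedAddCommGroup (E i)] [∀ i, InnerProductSpace ℂ (E i)]
    [∀ i, FiniteDimensional ℂ (E i)]
    (ω : ι → ℝ) (hω : ∀ i, 0 ≤ ω i)
    (Ph : ∀ i, E i →ₗ[ℂ] E i)
    (s C : ℝ) (hC : 0 < C) (hE : Est E Ph ω s C) :
    ∀ u : ∀ i, E i, ∃ v ∈ kerSet E Ph,
      ∀ t : ℝ, pws E Ph u ∈ Dwt E ω t →
        u - v ∈ Dwt E ω (s + t) ∧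
        ∑' i, Real.exp (2 * (s + t) * ω i) * ‖u i - v i‖ ^ 2 ≤
          C⁻¹ ^ 2 * ∑' i, Real.exp (2 * t * ω i) * ‖Ph i (u i)‖ ^ 2 := by
  intro u
  classical
  set v : ∀ i, E i := fun i => ((LinearMap.ker (Ph i)).orthogonalProjectionOnto (u i) : E i)
    with hv
  have hvker : v ∈ kerSet E Ph := fun i => ((LinearMap.ker (Ph i)).orthogonalProjectionOnto (u i)).2
  refine ⟨v, hvker, ?_⟩
  have hperp : ∀ i, u i - v i ∈ (LinearMap.ker (Ph i))ᗮ := fun i =>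
    Submodule.sub_starProjection_mem_orthogonal (u i)
  -- key pointwise estimate
  have key : ∀ i, C * Real.exp (s * ω i) * ‖u i - v i‖ ≤ ‖Ph i (u i)‖ := by
    intro i
    have hP : Ph i (u i - v i) = Ph i (u i) := by
      have : Ph i (v i) = 0 := hvker i
      simp [map_sub, this]
    rcases eq_or_ne (u i - v i) 0 with h0 | h0
    · rw [h0]
      simp [norm_nonneg]
    · set a := u i - v i with ha
      have hnorm : (0:ℝ) < ‖a‖ := norm_pos_iff.mpr h0
      have hφ : (‖a‖⁻¹ : ℂ) • a ∈ (LinearMap.ker (Ph i))ᗮ :=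
        Submodule.smul_mem _ _ (hperp i)
      have hφn : ‖(‖a‖⁻¹ : ℂ) • a‖ = 1 := by
        rw [norm_smul]
        simp [hnorm.ne']
      have := hE i _ hφ hφn
      rw [map_smul, norm_smul] at this
      have h2 : C * Real.exp (s * ω i) ≤ ‖a‖⁻¹ * ‖Ph i a‖ := by
        simpa using this
      calc C * Real.exp (s * ω i) * ‖a‖ ≤ (‖a‖⁻¹ * ‖Ph i a‖) * ‖a‖ := by
            exact mul_le_mul_of_nonneg_right h2 (norm_nonneg _)
        _ = ‖Ph i a‖ := by field_simp
        _ = ‖Ph i (u i)‖ := by rw [hP]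
  intro t ht
  have key2 : ∀ i, Real.exp (2 * (s + t) * ω i) * ‖u i - v i‖ ^ 2 ≤
      C⁻¹ ^ 2 * (Real.exp (2 * t * ω i) * ‖Ph i (u i)‖ ^ 2) := by
    intro i
    have h1 : (C * Real.exp (s * ω i) * ‖u i - v i‖) ^ 2 ≤ ‖Ph i (u i)‖ ^ 2 := by
      apply sq_le_sq' _ (key i)
      have : 0 ≤ C * Real.exp (s * ω i) * ‖u i - v i‖ :=
        mul_nonneg (mul_nonneg hC.le (Real.exp_pos _).le) (norm_nonneg _)
      linarith [key i]
    have hexp : Real.exp (2 * (s + t) * ω i)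
        = Real.exp (2 * t * ω i) * Real.exp (s * ω i) ^ 2 := by
      rw [← Real.exp_nat_mul, ← Real.exp_add]; ring_nf
    rw [hexp]
    have hE2 : Real.exp (s * ω i) ^ 2 * ‖u i - v i‖ ^ 2 ≤ C⁻¹ ^ 2 * ‖Ph i (u i)‖ ^ 2 := by
      have hC2 : (0:ℝ) < C ^ 2 := by positivity
      rw [inv_pow]
      rw [← mul_le_mul_iff_right₀ hC2]
      calc C ^ 2 * (Real.exp (s * ω i) ^ 2 * ‖u i - v i‖ ^ 2)
          = (C * Real.exp (s * ω i) * ‖u i - v i‖) ^ 2 := by ring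
        _ ≤ ‖Ph i (u i)‖ ^ 2 := h1
        _ = C ^ 2 * ((C ^ 2)⁻¹ * ‖Ph i (u i)‖ ^ 2) := by field_simp
    calc Real.exp (2 * t * ω i) * Real.exp (s * ω i) ^ 2 * ‖u i - v i‖ ^ 2
        = Real.exp (2 * t * ω i) * (Real.exp (s * ω i) ^ 2 * ‖u i - v i‖ ^ 2) := by ring
      _ ≤ Real.exp (2 * t * ω i) * (C⁻¹ ^ 2 * ‖Ph i (u i)‖ ^ 2) := by
          exact mul_le_mul_of_nonneg_left hE2 (Real.exp_pos _).le
      _ = C⁻¹ ^ 2 * (Real.exp (2 * t * ω i) * ‖Ph i (u i)‖ ^ 2) := by ring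
  have hsum : Summable fun i => C⁻¹ ^ 2 * (Real.exp (2 * t * ω i) * ‖Ph i (u i)‖ ^ 2) :=
    ht.mul_left _
  have hmem : Summable fun i => Real.exp (2 * (s + t) * ω i) * ‖u i - v i‖ ^ 2 := by
    refine Summable.of_nonneg_of_le (fun i => by positivity) key2 hsum
  refine ⟨hmem, ?_⟩
  calc ∑' i, Real.exp (2 * (s + t) * ω i) * ‖u i - v i‖ ^ 2
      ≤ ∑' i, C⁻¹ ^ 2 * (Real.exp (2 * t * ω i) * ‖Ph i (u i)‖ ^ 2) :=
        Summable.tsum_le_tsum key2 hmem hsum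
    _ = C⁻¹ ^ 2 * ∑' i, Real.exp (2 * t * ω i) * ‖Ph i (u i)‖ ^ 2 := tsum_mul_left
end
end

section
/- Let P be nonzero and assume condition S(ρ) holds for some ρ > 0. If for every s ∈ ℝ the estimate E(s,C) fails for every C > 0, then: (a) there exists u ∈ D'_{(ω)} such that P u ∈ D_{(ω)} but u + v ∉ D_{(ω)} for every v ∈ ker P; (b) there exists u ∈ Π such that P u ∈ D'_{(ω)} but u + v ∉ D'_{(ω)} for every v ∈ ker P. -/
noncomputable section

variable {ι : Type*}

/-! ### Auxiliary material for `statement_12` -/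

section Aux12

/-- An injective linear map on the orthocomplement of its kernel is bounded below on unit
vectors, in finite dimension. -/
lemma aux12_lb {F : Type*} [NormedAddCommGroup F] [InnerProductSpace ℂ F]
    [FiniteDimensional ℂ F] (T : F →ₗ[ℂ] F) :
    ∃ C > 0, ∀ φ ∈ (LinearMap.ker T)ᗮ, ‖φ‖ = 1 → C ≤ ‖T φ‖ := by
  set K := (LinearMap.ker T)ᗮ with hK
  have hker : LinearMap.ker (T.comp K.subtype) = ⊥ := by
    rw [LinearMap.ker_eq_bot']
    intro x hx
    have hx1 : (x : F) ∈ LinearMap.ker T := hx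
    have := (Submodule.orthogonal_disjoint (LinearMap.ker T)).eq_bot ▸
      Submodule.mem_inf.mpr ⟨hx1, x.2⟩
    exact Subtype.ext this
  obtain ⟨c, hc, hanti⟩ := (T.comp K.subtype).exists_antilipschitzWith hker
  refine ⟨(c : ℝ)⁻¹, by positivity, ?_⟩
  intro φ hφ h1
  have := hanti.le_mul_dist ⟨φ, hφ⟩ 0
  simp only [dist_zero_right, LinearMap.comp_apply, Submodule.coe_subtype, map_zero] at this
  have h2 : ‖(⟨φ, hφ⟩ : K)‖ = 1 := h1
  rw [h2] at this
  rw [inv_le_iff_one_le_mul₀ (by positivity)]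
  calc (1:ℝ) ≤ c * ‖T φ‖ := by simpa using this
  _ = ‖T φ‖ * c := by ring

open Classical in
/-- Extend a family defined on the image of `f : ℕ → ι` by zero. -/
noncomputable def extendFam (E : ι → Type*) [∀ i, NormedAddCommGroup (E i)]
    (f : ℕ → ι) (φ : ∀ n, E (f n)) : ∀ i, E i :=
  fun i => if h : ∃ n, f n = i then h.choose_spec ▸ φ h.choose else 0

lemma extendFam_apply (E : ι → Type*) [∀ i, NormedAddCommGroup (E i)]
    {f : ℕ → ι} (hf : Function.Injective f) (φ : ∀ n, E (f n)) (n : ℕ) :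
    extendFam E f φ (f n) = φ n := by
  have h : ∃ m, f m = f n := ⟨n, rfl⟩
  have key : ∀ (m) (hmn : f m = f n), m = n → (hmn ▸ φ m : E (f n)) = φ n := by
    rintro m hmn rfl
    rfl
  simp only [extendFam, dif_pos h]
  exact key h.choose h.choose_spec (hf h.choose_spec)

lemma extendFam_apply_ne (E : ι → Type*) [∀ i, NormedAddCommGroup (E i)]
    {f : ℕ → ι} (φ : ∀ n, E (f n)) {i : ι} (h : ∀ n, f n ≠ i) :
    extendFam E f φ i = 0 := by
  unfold extendFam; rw [dif_neg]; rintro ⟨n, rfl⟩; exact h n rfl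

lemma extendFam_mem (E : ι → Type*) [∀ i, NormedAddCommGroup (E i)]
    {f : ℕ → ι} (φ : ∀ n, E (f n)) (S : ∀ i, Set (E i)) (h0 : ∀ i, (0 : E i) ∈ S i)
    (hφ : ∀ n, φ n ∈ S (f n)) : ∀ i, extendFam E f φ i ∈ S i := by
  intro i
  unfold extendFam
  split
  · next h =>
    have key : ∀ (m) (hm : f m = i), (hm ▸ φ m : E i) ∈ S i := by
      rintro m rfl; exact hφ m
    exact key h.choose h.choose_spec
  · exact h0 i

/-- If the estimates all fail, witnesses with arbitrarily bad bounds can be found outside any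
finite set. -/
lemma aux12_claim (E : ι → Type*)
    [∀ i, NormedAddCommGroup (E i)] [∀ i, InnerProductSpace ℂ (E i)]
    [∀ i, FiniteDimensional ℂ (E i)]
    (ω : ι → ℝ) (hω : ∀ i, 0 ≤ ω i)
    (Ph : ∀ i, E i →ₗ[ℂ] E i)
    (hfail : ∀ s : ℝ, ∀ C > (0 : ℝ), ¬ Est E Ph ω s C)
    (n : ℕ) (F : Finset ι) :
    ∃ p : Σ i, E i, p.1 ∉ F ∧ p.2 ∈ (LinearMap.ker (Ph p.1))ᗮ ∧ ‖p.2‖ = 1 ∧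
      ‖Ph p.1 p.2‖ < Real.exp (-(n : ℝ) * (1 + ω p.1)) := by
  by_contra hcon
  push_neg at hcon
  choose g hg hgle using fun i => aux12_lb (Ph i)
  set C : ℝ := min (Real.exp (-(n : ℝ))) ((insert (1:ℝ) (F.image g)).min' (by simp)) with hC
  have hCpos : 0 < C := by
    apply lt_min (Real.exp_pos _)
    have hmem := Finset.min'_mem (insert (1:ℝ) (F.image g)) (by simp)
    rcases Finset.mem_insert.mp hmem with h | h
    · rw [h]; norm_num
    · obtain ⟨i, _, hi⟩ := Finset.mem_image.mp h
      rw [← hi]; exact hg i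
  refine hfail (-(n:ℝ)) C hCpos ?_
  intro i φ hφ h1
  by_cases hi : i ∈ F
  · have h2 : C ≤ g i := le_trans (min_le_right _ _)
      (Finset.min'_le _ _ (Finset.mem_insert_of_mem (Finset.mem_image_of_mem g hi)))
    calc C * Real.exp (-(n:ℝ) * ω i) ≤ C * 1 := by
          refine mul_le_mul_of_nonneg_left ?_ hCpos.le
          rw [Real.exp_le_one_iff]
          have h3 := hω i
          have h4 : (0:ℝ) ≤ (n:ℝ) := n.cast_nonneg
          nlinarith
      _ = C := mul_one C
      _ ≤ g i := h2
      _ ≤ ‖Ph i φ‖ := hgle i φ hφ h1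
  · have h3 := hcon ⟨i, φ⟩ hi hφ h1
    calc C * Real.exp (-(n:ℝ) * ω i)
        ≤ Real.exp (-(n:ℝ)) * Real.exp (-(n:ℝ) * ω i) :=
          mul_le_mul_of_nonneg_right (min_le_left _ _) (Real.exp_pos _).le
      _ = Real.exp (-(n:ℝ) * (1 + ω i)) := by rw [← Real.exp_add]; ring_nf
      _ ≤ ‖Ph i φ‖ := h3

/-- Construction of the bad sequence: distinct indices and nearly-null unit vectors. -/
lemma aux12_seq (E : ι → Type*)
    [∀ i, NormedAddCommGroup (E i)] [∀ i, InnerProductSpace ℂ (E i)]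
    [∀ i, FiniteDimensional ℂ (E i)]
    (ω : ι → ℝ) (hω : ∀ i, 0 ≤ ω i)
    (Ph : ∀ i, E i →ₗ[ℂ] E i)
    (hfail : ∀ s : ℝ, ∀ C > (0 : ℝ), ¬ Est E Ph ω s C) :
    ∃ (f : ℕ → ι) (φ : ∀ n, E (f n)), Function.Injective f ∧
      (∀ n, φ n ∈ (LinearMap.ker (Ph (f n)))ᗮ) ∧ (∀ n, ‖φ n‖ = 1) ∧
      (∀ n, ‖Ph (f n) (φ n)‖ < Real.exp (-(n : ℝ) * (1 + ω (f n)))) := by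
  classical
  choose p hp1 hp2 hp3 hp4 using aux12_claim E ω hω Ph hfail
  let Fs : ℕ → Finset ι := fun n => Nat.rec ∅ (fun k F => insert (p k F).1 F) n
  let f : ℕ → ι := fun n => (p n (Fs n)).1
  have hFs_succ : ∀ n, Fs (n + 1) = insert (f n) (Fs n) := fun n => rfl
  have hmono : ∀ m n, m ≤ n → Fs m ⊆ Fs n := by
    intro m n h
    induction n with
    | zero =>
      have : m = 0 := Nat.le_zero.mp h
      subst this; exact subset_rfl
    | succ k ih =>
      rcases Nat.lt_or_ge m (k + 1) with h' | h'
      · refine (ih (Nat.lt_succ_iff.mp h')).trans ?_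
        rw [hFs_succ]; exact Finset.subset_insert _ _
      · have : m = k + 1 := le_antisymm h h'
        subst this; exact subset_rfl
  have hinj : Function.Injective f := by
    have hlt : ∀ m n, m < n → f m ≠ f n := by
      intro m n hmn hEq
      have h1 : f m ∈ Fs n := hmono (m + 1) n hmn
        (by rw [hFs_succ]; exact Finset.mem_insert_self _ _)
      rw [hEq] at h1
      exact hp1 n (Fs n) h1
    intro a b hab
    rcases lt_trichotomy a b with h | h | h
    · exact absurd hab (hlt a b h)
    · exact h
    · exact absurd hab.symm (hlt b a h)
  exact ⟨f, fun n => (p n (Fs n)).2, hinj, fun n => hp2 n (Fs n), fun n => hp3 n (Fs n),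
    fun n => hp4 n (Fs n)⟩

lemma aux12_geom : Summable fun n : ℕ => Real.exp (-2 * n) := by
  have h : ∀ n : ℕ, Real.exp (-2 * n) = (Real.exp (-2)) ^ n := by
    intro n
    rw [← Real.exp_nat_mul]
    ring_nf
  simp only [h]
  exact summable_geometric_of_lt_one (Real.exp_pos _).le
    (Real.exp_lt_one_iff.mpr (by norm_num))

lemma aux12_not_summable {g : ℕ → ℝ} (h : ∀ᶠ n in Filter.atTop, 1 ≤ g n) : ¬ Summable g := by
  intro hs
  have h2 := hs.tendsto_atTop_zero.eventually_lt_const (show (0:ℝ) < 1 by norm_num)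
  obtain ⟨n, hn1, hn2⟩ := (h.and h2).exists
  linarith

end Aux12

theorem statement_12 {ι : Type*} [Countable ι] (E : ι → Type*)
    [∀ i, NormedAddCommGroup (E i)] [∀ i, InnerProductSpace ℂ (E i)]
    [∀ i, FiniteDimensional ℂ (E i)]
    (ω : ι → ℝ) (hω : ∀ i, 0 ≤ ω i)
    (Ph : ∀ i, E i →ₗ[ℂ] E i) (hne : ∃ i, Ph i ≠ 0)
    (ρ : ℝ) (hρ : 0 < ρ) (hS : Summable fun i => Real.exp (-ρ * ω i))
    (hfail : ∀ s : ℝ, ∀ C > (0 : ℝ), ¬ Est E Ph ω s C) :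
    (∃ u ∈ Dbeu' E ω, pws E Ph u ∈ Dbeu E ω ∧
      ∀ v ∈ kerSet E Ph, u + v ∉ Dbeu E ω) ∧
    (∃ u : ∀ i, E i, pws E Ph u ∈ Dbeu' E ω ∧
      ∀ v ∈ kerSet E Ph, u + v ∉ Dbeu' E ω) := by
  classical
  obtain ⟨f, φ, hinj, hperp, hnorm, hsmall⟩ := aux12_seq E ω hω Ph hfail
  -- generic "not summable" helper for sums ≥ 1 along the sequence
  -- Part (a)
  set ua : ∀ i, E i := extendFam E f φ with hua
  have hua_eval : ∀ n, ua (f n) = φ n := extendFam_apply E hinj φ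
  have hua_zero : ∀ i, (∀ n, f n ≠ i) → ua i = 0 := fun i h => extendFam_apply_ne E φ h
  have hua_perp : ∀ i, ua i ∈ (LinearMap.ker (Ph i))ᗮ :=
    extendFam_mem E φ (fun i => ((LinearMap.ker (Ph i))ᗮ : Set (E i)))
      (fun i => Submodule.zero_mem _) hperp
  have hua_norm_le : ∀ i, ‖ua i‖ ≤ 1 := by
    intro i
    by_cases h : ∃ n, f n = i
    · obtain ⟨n, rfl⟩ := h
      rw [hua_eval, hnorm n]
    · push_neg at h
      rw [hua_zero i h]
      simp
  -- orthogonality comparison with kernel elements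
  have pythag : ∀ (w : ∀ i, E i), w ∈ kerSet E Ph → ∀ (u : ∀ i, E i),
      (∀ i, u i ∈ (LinearMap.ker (Ph i))ᗮ) → ∀ i, ‖u i‖ ^ 2 ≤ ‖u i + w i‖ ^ 2 := by
    intro w hw u hu i
    have horth : (inner ℂ (w i) (u i) : ℂ) = 0 :=
      Submodule.inner_right_of_mem_orthogonal (hw i) (hu i)
    have := norm_add_sq_eq_norm_sq_add_norm_sq_of_inner_eq_zero (𝕜 := ℂ) (w i) (u i) horth
    have hcomm : u i + w i = w i + u i := add_comm _ _
    simp only [pow_two]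
    rw [hcomm, this]
    nlinarith [mul_self_nonneg ‖w i‖]
  constructor
  · refine ⟨ua, ⟨ρ / 2, by positivity, ?_⟩, ?_, ?_⟩
    · -- ua ∈ D_{ω, -ρ/2}
      simp only [Dwt, Set.mem_setOf_eq]
      refine Summable.of_nonneg_of_le (fun i => by positivity) (fun i => ?_) hS
      have h1 : 2 * -(ρ / 2) * ω i = -ρ * ω i := by ring
      rw [h1]
      calc Real.exp (-ρ * ω i) * ‖ua i‖ ^ 2 ≤ Real.exp (-ρ * ω i) * 1 :=
            mul_le_mul_of_nonneg_left (pow_le_one₀ (norm_nonneg _) (hua_norm_le i))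
              (Real.exp_pos _).le
        _ = Real.exp (-ρ * ω i) := mul_one _
    · -- P ua ∈ D_{(ω)}
      intro t ht
      simp only [Dwt, pws, Set.mem_setOf_eq]
      rw [← Function.Injective.summable_iff hinj]
      · obtain ⟨N, hN⟩ := exists_nat_ge t
        rw [← summable_nat_add_iff N]
        simp only [Function.comp]
        refine Summable.of_nonneg_of_le (fun n => by positivity) (fun n => ?_) aux12_geom
        simp only [hua_eval]
        set a := ω (f (n + N)) with ha
        have ha0 : 0 ≤ a := hω _
        have hsm := (hsmall (n + N)).le
        have h1 : ‖Ph (f (n + N)) (φ (n + N))‖ ^ 2 ≤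
            Real.exp (-((n + N : ℕ) : ℝ) * (1 + a)) ^ 2 :=
          pow_le_pow_left₀ (norm_nonneg _) hsm 2
        calc Real.exp (2 * t * a) * ‖Ph (f (n + N)) (φ (n + N))‖ ^ 2
            ≤ Real.exp (2 * t * a) * Real.exp (-((n + N : ℕ) : ℝ) * (1 + a)) ^ 2 :=
              mul_le_mul_of_nonneg_left h1 (Real.exp_pos _).le
          _ = Real.exp (2 * t * a + (-((n + N : ℕ) : ℝ) * (1 + a) +
                -((n + N : ℕ) : ℝ) * (1 + a))) := by
              rw [pow_two, ← Real.exp_add, ← Real.exp_add]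
          _ ≤ Real.exp (-2 * n) := by
              rw [Real.exp_le_exp]
              push_cast
              have key : a * (t - ((n : ℝ) + (N : ℝ))) ≤ 0 := by
                apply mul_nonpos_of_nonneg_of_nonpos ha0
                have : (0:ℝ) ≤ (n : ℝ) := n.cast_nonneg
                linarith
              nlinarith
      · intro i hi
        have h : ∀ n, f n ≠ i := fun n hn => hi ⟨n, hn⟩
        rw [hua_zero i h, map_zero]
        simp
    · -- ua + v ∉ D_{(ω)}
      intro v hv hmem
      have hs := hmem 1 one_pos
      simp only [Dwt, Set.mem_setOf_eq] at hs
      have hs2 : Summable fun i => Real.exp (2 * 1 * ω i) * ‖ua i‖ ^ 2 := by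
        refine Summable.of_nonneg_of_le (fun i => by positivity) (fun i => ?_) hs
        have h1 := pythag v hv ua hua_perp i
        have h2 : (ua + v) i = ua i + v i := rfl
        rw [h2]
        exact mul_le_mul_of_nonneg_left h1 (Real.exp_pos _).le
      have hs3 := hs2.comp_injective hinj
      refine aux12_not_summable ?_ hs3
      refine Filter.Eventually.of_forall fun n => ?_
      simp only [Function.comp, hua_eval, hnorm]
      rw [one_pow, mul_one]
      exact Real.one_le_exp (by nlinarith [hω (f n)])
  · -- Part (b)
    set φb : ∀ n, E (f n) :=
      fun n => ((Real.exp ((n : ℝ) * ω (f n)) : ℝ) : ℂ) • φ n with hφb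
    set ub : ∀ i, E i := extendFam E f φb with hub
    have hub_eval : ∀ n, ub (f n) = φb n := extendFam_apply E hinj φb
    have hub_zero : ∀ i, (∀ n, f n ≠ i) → ub i = 0 := fun i h => extendFam_apply_ne E φb h
    have hub_perp : ∀ i, ub i ∈ (LinearMap.ker (Ph i))ᗮ :=
      extendFam_mem E φb (fun i => ((LinearMap.ker (Ph i))ᗮ : Set (E i)))
        (fun i => Submodule.zero_mem _) (fun n => Submodule.smul_mem _ _ (hperp n))
    have hφb_norm : ∀ n, ‖φb n‖ = Real.exp ((n : ℝ) * ω (f n)) := by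
      intro n
      rw [hφb]
      rw [norm_smul, hnorm n, mul_one, Complex.norm_real, Real.norm_eq_abs,
        abs_of_pos (Real.exp_pos _)]
    refine ⟨ub, ⟨1, one_pos, ?_⟩, ?_⟩
    · -- P ub ∈ D_{ω,-1}
      simp only [Dwt, pws, Set.mem_setOf_eq]
      rw [← Function.Injective.summable_iff hinj]
      · simp only [Function.comp_def]
        refine Summable.of_nonneg_of_le (fun n => by positivity) (fun n => ?_) aux12_geom
        simp only [hub_eval]
        set a := ω (f n) with ha
        have ha0 : 0 ≤ a := hω _
        have hb : ‖Ph (f n) (φb n)‖ ≤ Real.exp (-(n : ℝ)) := by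
          rw [hφb]
          simp only [map_smul, norm_smul, Complex.norm_real, Real.norm_eq_abs,
            abs_of_pos (Real.exp_pos _)]
          calc Real.exp ((n : ℝ) * a) * ‖Ph (f n) (φ n)‖
              ≤ Real.exp ((n : ℝ) * a) * Real.exp (-(n : ℝ) * (1 + a)) :=
                mul_le_mul_of_nonneg_left (hsmall n).le (Real.exp_pos _).le
            _ = Real.exp (-(n : ℝ)) := by rw [← Real.exp_add]; congr 1; ring
        have hb2 : ‖Ph (f n) (φb n)‖ ^ 2 ≤ Real.exp (-(n : ℝ)) ^ 2 :=
          pow_le_pow_left₀ (norm_nonneg _) hb 2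
        calc Real.exp (2 * -1 * a) * ‖Ph (f n) (φb n)‖ ^ 2
            ≤ 1 * Real.exp (-(n : ℝ)) ^ 2 := by
              refine mul_le_mul ?_ hb2 (by positivity) one_pos.le
              rw [Real.exp_le_one_iff]; nlinarith
          _ = Real.exp (-2 * n) := by
              rw [one_mul, pow_two, ← Real.exp_add]; congr 1; ring
      · intro i hi
        have h : ∀ n, f n ≠ i := fun n hn => hi ⟨n, hn⟩
        rw [hub_zero i h, map_zero]
        simp
    · -- ub + v ∉ D'_{(ω)}
      rintro v hv ⟨t, ht, hmem⟩
      simp only [Dwt, Set.mem_setOf_eq] at hmem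
      have hs2 : Summable fun i => Real.exp (2 * -t * ω i) * ‖ub i‖ ^ 2 := by
        refine Summable.of_nonneg_of_le (fun i => by positivity) (fun i => ?_) hmem
        have h1 := pythag v hv ub hub_perp i
        have h2 : (ub + v) i = ub i + v i := rfl
        rw [h2]
        exact mul_le_mul_of_nonneg_left h1 (Real.exp_pos _).le
      have hs3 := hs2.comp_injective hinj
      refine aux12_not_summable ?_ hs3
      obtain ⟨N, hN⟩ := exists_nat_ge t
      rw [Filter.eventually_atTop]
      refine ⟨N, fun n hn => ?_⟩
      simp only [Function.comp, hub_eval, hφb_norm]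
      set a := ω (f n) with ha
      have ha0 : 0 ≤ a := hω _
      have h1 : Real.exp (2 * -t * a) * Real.exp ((n : ℝ) * a) ^ 2 =
          Real.exp (2 * -t * a + ((n : ℝ) * a + (n : ℝ) * a)) := by
        rw [pow_two, ← Real.exp_add, ← Real.exp_add]
      rw [h1]
      apply Real.one_le_exp
      have hNn : t ≤ (n : ℝ) := hN.trans (by exact_mod_cast hn)
      nlinarith [mul_nonneg ha0 (sub_nonneg.mpr hNn)]
end
end

section
/- Let P be nonzero and assume condition S(ρ) holds for every ρ > 0. If for some s < 0 the estimate E(s,C) fails for every C > 0, then: (a) there exists u ∈ D'_{{ω}} such that P u ∈ D_{{ω}} but u + v ∉ D_{{ω}} for every v ∈ ker P; (b) there exists u ∈ Π such that P u ∈ D'_{{ω}} but u + v ∉ D'_{{ω}} for every v ∈ ker P. -/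
noncomputable section

variable {ι : Type*}

section Aux13

open Real Filter

variable {ι : Type*} (E : ι → Type*)
    [∀ i, NormedAddCommGroup (E i)] [∀ i, InnerProductSpace ℂ (E i)]

lemma st13_lb [∀ i, FiniteDimensional ℂ (E i)] (Ph : ∀ i, E i →ₗ[ℂ] E i) (i : ι) :
    ∃ c > (0:ℝ), ∀ φ ∈ (LinearMap.ker (Ph i))ᗮ, ‖φ‖ = 1 → c ≤ ‖Ph i φ‖ := by
  classical
  set K := (LinearMap.ker (Ph i))ᗮ with hKdef
  let f : K →ₗ[ℂ] E i := (Ph i).comp K.subtype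
  have hker : LinearMap.ker f = ⊥ := by
    rw [eq_bot_iff]
    rintro ⟨x, hx⟩ hfx
    have hx0 : Ph i x = 0 := hfx
    have h0 : (inner ℂ x x : ℂ) = 0 :=
      (Submodule.mem_orthogonal _ x).1 hx x (LinearMap.mem_ker.2 hx0)
    have hx' : x = 0 := inner_self_eq_zero.1 h0
    rw [Submodule.mem_bot]
    exact Subtype.ext hx'
  obtain ⟨Kc, hKc0, hA⟩ := f.exists_antilipschitzWith hker
  have hKc0' : (0:ℝ) < Kc := by exact_mod_cast hKc0
  refine ⟨(Kc:ℝ)⁻¹, by positivity, ?_⟩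
  intro φ hφ hn
  have h1 := hA.le_mul_dist (⟨φ, hφ⟩ : K) 0
  simp only [dist_eq_norm, sub_zero, map_zero] at h1
  have h2 : (1:ℝ) ≤ (Kc:ℝ) * ‖Ph i φ‖ := by
    have hnx : ‖(⟨φ, hφ⟩ : K)‖ = 1 := hn
    calc (1:ℝ) = ‖(⟨φ, hφ⟩ : K)‖ := hnx.symm
        _ ≤ (Kc:ℝ) * ‖f (⟨φ, hφ⟩ : K)‖ := h1
        _ = (Kc:ℝ) * ‖Ph i φ‖ := rfl
  calc (Kc:ℝ)⁻¹ = (Kc:ℝ)⁻¹ * 1 := (mul_one _).symm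
    _ ≤ (Kc:ℝ)⁻¹ * ((Kc:ℝ) * ‖Ph i φ‖) := by gcongr
    _ = ‖Ph i φ‖ := by field_simp

lemma st13_fresh [∀ i, FiniteDimensional ℂ (E i)] (ω : ι → ℝ)
    (Ph : ∀ i, E i →ₗ[ℂ] E i) (s : ℝ)
    (hfail : ∀ C > (0 : ℝ), ¬ Est E Ph ω s C) (F : Finset ι) (n : ℕ) :
    ∃ i, i ∉ F ∧ ∃ φ, φ ∈ (LinearMap.ker (Ph i))ᗮ ∧ ‖φ‖ = 1 ∧
      ‖Ph i φ‖ < Real.exp (-(n:ℝ)) * Real.exp (s * ω i) := by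
  classical
  choose c hc hcle using st13_lb E Ph
  set g : ι → ℝ := fun i => c i * Real.exp (-(s * ω i)) with hg
  have hgpos : ∀ i, 0 < g i := fun i => mul_pos (hc i) (Real.exp_pos _)
  set C0 : ℝ := if h : F.Nonempty then F.inf' h g else 1 with hC0
  have hC0pos : 0 < C0 := by
    rw [hC0]; split_ifs with h
    · exact (Finset.lt_inf'_iff h).2 fun i _ => hgpos i
    · exact one_pos
  have hC0le : ∀ i ∈ F, C0 ≤ g i := by
    intro i hi
    rw [hC0, dif_pos ⟨i, hi⟩]
    exact Finset.inf'_le _ hi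
  set C : ℝ := min (Real.exp (-(n:ℝ))) C0 with hC
  have hCpos : 0 < C := lt_min (Real.exp_pos _) hC0pos
  have hF := hfail C hCpos
  rw [Est] at hF
  push_neg at hF
  obtain ⟨i, φ, hφmem, hφn, hlt⟩ := hF
  refine ⟨i, ?_, φ, hφmem, hφn, ?_⟩
  · intro hiF
    have h1 : c i ≤ ‖Ph i φ‖ := hcle i φ hφmem hφn
    have h3 : C ≤ g i := le_trans (min_le_right _ _) (hC0le i hiF)
    have h4 : C * Real.exp (s * ω i) ≤ c i := by
      calc C * Real.exp (s * ω i) ≤ g i * Real.exp (s * ω i) := by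
            gcongr
        _ = c i * Real.exp (-(s * ω i) + s * ω i) := by rw [hg, mul_assoc, Real.exp_add]
        _ = c i := by simp
    linarith
  · exact lt_of_lt_of_le hlt (by gcongr; exact min_le_left _ _)

lemma st13_seq [∀ i, FiniteDimensional ℂ (E i)] (ω : ι → ℝ)
    (Ph : ∀ i, E i →ₗ[ℂ] E i) (s : ℝ)
    (hfail : ∀ C > (0 : ℝ), ¬ Est E Ph ω s C) :
    ∃ idx : ℕ → ι, Function.Injective idx ∧ ∃ φ : ∀ n, E (idx n),
      ∀ n, φ n ∈ (LinearMap.ker (Ph (idx n)))ᗮ ∧ ‖φ n‖ = 1 ∧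
        ‖Ph (idx n) (φ n)‖ < Real.exp (-(n:ℝ)) * Real.exp (s * ω (idx n)) := by
  classical
  choose pick hnot φf hmem hn hlt using st13_fresh E ω Ph s hfail
  let Fs : ℕ → Finset ι := fun n => Nat.rec ∅ (fun k Fk => insert (pick Fk k) Fk) n
  have hFs : ∀ n, Fs (n+1) = insert (pick (Fs n) n) (Fs n) := fun n => rfl
  set idx : ℕ → ι := fun n => pick (Fs n) n with hidx
  have hmem' : ∀ m n, m < n → idx m ∈ Fs n := by
    intro m n h
    induction n with
    | zero => omega
    | succ k ih =>
      rw [hFs]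
      rcases Nat.lt_succ_iff_lt_or_eq.1 h with h' | h'
      · exact Finset.mem_insert_of_mem (ih h')
      · subst h'; exact Finset.mem_insert_self _ _
  have hinj : Function.Injective idx := by
    intro a b hab
    by_contra hne
    rcases Nat.lt_or_ge a b with h | h
    · have h2 : idx a ∈ Fs b := hmem' a b h
      rw [hab] at h2
      exact hnot (Fs b) b h2
    · have h' : b < a := lt_of_le_of_ne h (Ne.symm hne)
      have h2 : idx b ∈ Fs a := hmem' b a h'
      rw [← hab] at h2
      exact hnot (Fs a) a h2
  exact ⟨idx, hinj, fun n => φf (Fs n) n, fun n => ⟨hmem _ _, hn _ _, hlt _ _⟩⟩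

lemma st13_mk {idx : ℕ → ι} (hinj : Function.Injective idx) (ψ : ∀ n, E (idx n)) :
    ∃ u : ∀ i, E i, (∀ n, u (idx n) = ψ n) ∧ ∀ i, (∀ n, idx n ≠ i) → u i = 0 := by
  classical
  refine ⟨fun i => if h : ∃ n, idx n = i then h.choose_spec ▸ ψ h.choose else 0, ?_, ?_⟩
  · intro n
    have h : ∃ m, idx m = idx n := ⟨n, rfl⟩
    have key : ∀ m (e : idx m = idx n), (e ▸ ψ m : E (idx n)) = ψ n := by
      intro m e
      obtain rfl : m = n := hinj e
      rfl
    simp only [dif_pos h]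
    exact key _ h.choose_spec
  · intro i hi
    have hne : ¬ ∃ n, idx n = i := fun ⟨n, hn⟩ => hi n hn
    simp only [dif_neg hne]

lemma st13_summable_iff {idx : ℕ → ι} (hinj : Function.Injective idx)
    {f : ι → ℝ} (hf : ∀ i, (∀ n, idx n ≠ i) → f i = 0) :
    Summable f ↔ Summable (f ∘ idx) := by
  refine (Function.Injective.summable_iff hinj ?_).symm
  intro i hi
  exact hf i fun n hn => hi ⟨n, hn⟩

lemma st13_not_summable {idx : ℕ → ι} (hinj : Function.Injective idx)
    {f : ι → ℝ} (hf : ∀ n, 1 ≤ f (idx n)) : ¬ Summable f := by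
  intro hsum
  have h1 : Summable (f ∘ idx) := hsum.comp_injective hinj
  have h2 := h1.tendsto_atTop_zero
  obtain ⟨n, hn⟩ := (h2.eventually_lt_const (zero_lt_one)).exists
  exact absurd (hf n) (not_le.2 hn)

lemma st13_pyth {V : Type*} [NormedAddCommGroup V] [InnerProductSpace ℂ V]
    {K : Submodule ℂ V} {x y : V} (hx : x ∈ Kᗮ) (hy : y ∈ K) :
    ‖x‖ ^ 2 ≤ ‖x + y‖ ^ 2 := by
  have h : (inner ℂ x y : ℂ) = 0 := (Submodule.mem_orthogonal' K x).1 hx y hy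
  rw [@norm_add_sq ℂ _ _ _ _ x y, h]
  simp only [map_zero, mul_zero, add_zero]
  nlinarith [sq_nonneg ‖y‖]

lemma st13_exp_sq (a b : ℝ) : Real.exp a * Real.exp b ^ 2 = Real.exp (a + 2 * b) := by
  rw [sq, ← Real.exp_add, ← Real.exp_add]
  ring_nf

lemma st13_geom : Summable fun n : ℕ => Real.exp (-2) ^ n :=
  summable_geometric_of_lt_one (Real.exp_nonneg _) (Real.exp_lt_one_iff.2 (by norm_num))

lemma st13_exp_pow (n : ℕ) : Real.exp ((n:ℝ) * (-2)) = Real.exp (-2) ^ n :=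
  Real.exp_nat_mul _ n

end Aux13

theorem statement_13 {ι : Type*} [Countable ι] (E : ι → Type*)
    [∀ i, NormedAddCommGroup (E i)] [∀ i, InnerProductSpace ℂ (E i)]
    [∀ i, FiniteDimensional ℂ (E i)]
    (ω : ι → ℝ) (hω : ∀ i, 0 ≤ ω i)
    (Ph : ∀ i, E i →ₗ[ℂ] E i) (hne : ∃ i, Ph i ≠ 0)
    (hS : ∀ ρ > (0 : ℝ), Summable fun i => Real.exp (-ρ * ω i))
    (s : ℝ) (hs : s < 0) (hfail : ∀ C > (0 : ℝ), ¬ Est E Ph ω s C) :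
    (∃ u ∈ Drou' E ω, pws E Ph u ∈ Drou E ω ∧
      ∀ v ∈ kerSet E Ph, u + v ∉ Drou E ω) ∧
    (∃ u : ∀ i, E i, pws E Ph u ∈ Drou' E ω ∧
      ∀ v ∈ kerSet E Ph, u + v ∉ Drou' E ω) := by
  classical
  obtain ⟨idx, hinj, φ, hφ⟩ := st13_seq E ω Ph s hfail
  have hφmem : ∀ n, φ n ∈ (LinearMap.ker (Ph (idx n)))ᗮ := fun n => (hφ n).1
  have hφn : ∀ n, ‖φ n‖ = 1 := fun n => (hφ n).2.1
  have hφlt : ∀ n, ‖Ph (idx n) (φ n)‖ < Real.exp (-(n:ℝ)) * Real.exp (s * ω (idx n)) :=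
    fun n => (hφ n).2.2
  have hsω : ∀ n, s * ω (idx n) ≤ 0 :=
    fun n => mul_nonpos_of_nonpos_of_nonneg hs.le (hω (idx n))
  constructor
  · -- part (a)
    obtain ⟨u, hu1, hu2⟩ := st13_mk E hinj φ
    refine ⟨u, ?_, ?_, ?_⟩
    · -- u ∈ Drou'
      intro t ht
      show Summable fun i => Real.exp (2 * -t * ω i) * ‖u i‖ ^ 2
      rw [st13_summable_iff hinj (fun i hi => by rw [hu2 i hi]; simp)]
      have hbase : Summable ((fun i => Real.exp (-(2*t) * ω i)) ∘ idx) :=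
        (hS (2*t) (by linarith)).comp_injective hinj
      refine Summable.of_nonneg_of_le (fun n => by simp only [Function.comp_apply]; positivity) (fun n => ?_) hbase
      simp only [Function.comp_apply, hu1 n, hφn n, one_pow, mul_one]
      apply Real.exp_le_exp.2
      apply le_of_eq; ring
    · -- pws u ∈ Drou
      refine ⟨-s/2, by linarith, ?_⟩
      show Summable fun i => Real.exp (2 * (-s/2) * ω i) * ‖pws E Ph u i‖ ^ 2
      rw [st13_summable_iff hinj (fun i hi => by
        simp [pws, hu2 i hi])]
      refine Summable.of_nonneg_of_le (fun n => by simp only [Function.comp_apply]; positivity) (fun n => ?_) st13_geom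
      have h1 : ‖Ph (idx n) (φ n)‖ ≤ Real.exp (-(n:ℝ) + s * ω (idx n)) := by
        rw [Real.exp_add]; exact (hφlt n).le
      calc Real.exp (2 * (-s/2) * ω (idx n)) * ‖pws E Ph u (idx n)‖ ^ 2
          = Real.exp (2 * (-s/2) * ω (idx n)) * ‖Ph (idx n) (φ n)‖ ^ 2 := by
            rw [show pws E Ph u (idx n) = Ph (idx n) (u (idx n)) from rfl, hu1 n]
        _ ≤ Real.exp (2 * (-s/2) * ω (idx n)) *
              Real.exp (-(n:ℝ) + s * ω (idx n)) ^ 2 := by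
            gcongr
        _ = Real.exp (2 * (-s/2) * ω (idx n) + 2 * (-(n:ℝ) + s * ω (idx n))) :=
            st13_exp_sq _ _
        _ ≤ Real.exp ((n:ℝ) * (-2)) := by
            apply Real.exp_le_exp.2
            nlinarith [hsω n]
        _ = Real.exp (-2) ^ n := st13_exp_pow n
    · -- u + v ∉ Drou
      intro v hv hcon
      obtain ⟨t, ht, hsum⟩ := hcon
      refine st13_not_summable hinj (f := fun i => Real.exp (2 * t * ω i) * ‖(u+v) i‖ ^ 2)
        (fun n => ?_) hsum
      have hvk : v (idx n) ∈ LinearMap.ker (Ph (idx n)) := LinearMap.mem_ker.2 (hv (idx n))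
      have hp : ‖φ n‖ ^ 2 ≤ ‖φ n + v (idx n)‖ ^ 2 := st13_pyth (hφmem n) hvk
      have h2 : (1:ℝ) ≤ ‖(u+v) (idx n)‖ ^ 2 := by
        have : (u+v) (idx n) = φ n + v (idx n) := by
          show u (idx n) + v (idx n) = _
          rw [hu1 n]
        rw [this]
        calc (1:ℝ) = ‖φ n‖ ^ 2 := by rw [hφn n]; norm_num
          _ ≤ _ := hp
      have h3 : (1:ℝ) ≤ Real.exp (2 * t * ω (idx n)) :=
        Real.one_le_exp (mul_nonneg (by linarith) (hω (idx n)))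
      calc (1:ℝ) = 1 * 1 := (one_mul 1).symm
        _ ≤ Real.exp (2 * t * ω (idx n)) * ‖(u+v) (idx n)‖ ^ 2 := by gcongr
  · -- part (b)
    set c : ℕ → ℝ := fun n => Real.exp (-(s * ω (idx n)) / 2) with hc
    have hcpos : ∀ n, 0 < c n := fun n => Real.exp_pos _
    set ψ : ∀ n, E (idx n) := fun n => ((c n : ℝ) : ℂ) • φ n with hψ
    have hψmem : ∀ n, ψ n ∈ (LinearMap.ker (Ph (idx n)))ᗮ :=
      fun n => Submodule.smul_mem _ _ (hφmem n)
    have hψnorm : ∀ n, ‖ψ n‖ = c n := by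
      intro n
      rw [hψ]
      simp only [norm_smul, Complex.norm_real, Real.norm_eq_abs, hφn n, mul_one]
      exact abs_of_pos (hcpos n)
    obtain ⟨u, hu1, hu2⟩ := st13_mk E hinj ψ
    refine ⟨u, ?_, ?_⟩
    · -- pws u ∈ Drou'
      intro t ht
      show Summable fun i => Real.exp (2 * -t * ω i) * ‖pws E Ph u i‖ ^ 2
      rw [st13_summable_iff hinj (fun i hi => by simp [pws, hu2 i hi])]
      refine Summable.of_nonneg_of_le (fun n => by simp only [Function.comp_apply]; positivity) (fun n => ?_) st13_geom
      have hPψ : ‖Ph (idx n) (ψ n)‖ ≤ Real.exp (-(n:ℝ) + s * ω (idx n) / 2) := by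
        have : Ph (idx n) (ψ n) = ((c n : ℝ) : ℂ) • Ph (idx n) (φ n) := by
          rw [hψ]; exact map_smul _ _ _
        rw [this, norm_smul, Complex.norm_real, Real.norm_eq_abs, abs_of_pos (hcpos n)]
        calc c n * ‖Ph (idx n) (φ n)‖
            ≤ c n * (Real.exp (-(n:ℝ)) * Real.exp (s * ω (idx n))) := by
              gcongr
              exact (hφlt n).le
          _ = Real.exp (-(s * ω (idx n)) / 2 + (-(n:ℝ) + s * ω (idx n))) := by
              rw [hc, ← Real.exp_add, ← Real.exp_add]
          _ = Real.exp (-(n:ℝ) + s * ω (idx n) / 2) := by ring_nf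
      calc Real.exp (2 * -t * ω (idx n)) * ‖pws E Ph u (idx n)‖ ^ 2
          = Real.exp (2 * -t * ω (idx n)) * ‖Ph (idx n) (ψ n)‖ ^ 2 := by
            rw [show pws E Ph u (idx n) = Ph (idx n) (u (idx n)) from rfl, hu1 n]
        _ ≤ Real.exp (2 * -t * ω (idx n)) *
              Real.exp (-(n:ℝ) + s * ω (idx n) / 2) ^ 2 := by
            gcongr
        _ = Real.exp (2 * -t * ω (idx n) + 2 * (-(n:ℝ) + s * ω (idx n) / 2)) :=
            st13_exp_sq _ _
        _ ≤ Real.exp ((n:ℝ) * (-2)) := by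
            apply Real.exp_le_exp.2
            nlinarith [hsω n, mul_nonneg ht.le (hω (idx n))]
        _ = Real.exp (-2) ^ n := st13_exp_pow n
    · -- u + v ∉ Drou'
      intro v hv hcon
      have hsum := hcon (-s/2) (by linarith)
      refine st13_not_summable hinj
        (f := fun i => Real.exp (2 * -(-s/2) * ω i) * ‖(u+v) i‖ ^ 2) (fun n => ?_) hsum
      have hvk : v (idx n) ∈ LinearMap.ker (Ph (idx n)) := LinearMap.mem_ker.2 (hv (idx n))
      have hp : ‖ψ n‖ ^ 2 ≤ ‖ψ n + v (idx n)‖ ^ 2 := st13_pyth (hψmem n) hvk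
      have heq : (u+v) (idx n) = ψ n + v (idx n) := by
        show u (idx n) + v (idx n) = _
        rw [hu1 n]
      have hcsq : ‖ψ n‖ ^ 2 = Real.exp (-(s * ω (idx n))) := by
        rw [hψnorm n, hc, sq, ← Real.exp_add]
        ring_nf
      calc (1:ℝ) = Real.exp (2 * -(-s/2) * ω (idx n)) * Real.exp (-(s * ω (idx n))) := by
            rw [← Real.exp_add, show 2 * -(-s/2) * ω (idx n) + -(s * ω (idx n)) = 0 by ring,
              Real.exp_zero]
        _ = Real.exp (2 * -(-s/2) * ω (idx n)) * ‖ψ n‖ ^ 2 := by rw [hcsq]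
        _ ≤ Real.exp (2 * -(-s/2) * ω (idx n)) * ‖(u+v) (idx n)‖ ^ 2 := by
            rw [heq]; gcongr
end
end

section
/- Let P be nonzero and assume condition S(ρ) holds for some ρ > 0. Then P is AGHE_{(ω)} if and only if there exist s ∈ ℝ and C > 0 such that the estimate E(s,C) holds. In that case, for every u ∈ Π there exists v ∈ ker P such that, for every t ∈ ℝ, P u ∈ D_{ω,t} implies u − v ∈ D_{ω,s+t}; in particular, if P u ∈ D_{(ω)} then u − v ∈ D_{(ω)}. -/
noncomputable section

variable {ι : Type*}

/- ### Auxiliary lemmas -/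

lemma Dwt_mono' {E : ι → Type*} [∀ i, NormedAddCommGroup (E i)] {ω : ι → ℝ}
    (hω : ∀ i, 0 ≤ ω i) {t t' : ℝ} (h : t' ≤ t) : Dwt E ω t ⊆ Dwt E ω t' := by
  intro a ha
  refine Summable.of_nonneg_of_le (fun i => by positivity) (fun i => ?_) ha
  have : Real.exp (2 * t' * ω i) ≤ Real.exp (2 * t * ω i) := by
    apply Real.exp_le_exp.mpr
    nlinarith [hω i]
  nlinarith [norm_nonneg (a i), sq_nonneg ‖a i‖]

lemma part2' (E : ι → Type*) [∀ i, NormedAddCommGroup (E i)]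
    [∀ i, InnerProductSpace ℂ (E i)] [∀ i, FiniteDimensional ℂ (E i)]
    {ω : ι → ℝ} (Ph : ∀ i, E i →ₗ[ℂ] E i)
    {s C : ℝ} (hC : 0 < C) (hEst : Est E Ph ω s C) (u : ∀ i, E i) :
    ∃ v ∈ kerSet E Ph, ∀ t : ℝ, pws E Ph u ∈ Dwt E ω t → u - v ∈ Dwt E ω (s + t) := by
  classical
  set v : ∀ i, E i := fun i => (Submodule.orthogonalProjectionOnto (LinearMap.ker (Ph i)) (u i) : E i)
    with hv
  have hvker : v ∈ kerSet E Ph := fun i =>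
    LinearMap.mem_ker.mp (Submodule.orthogonalProjectionOnto (LinearMap.ker (Ph i)) (u i)).2
  refine ⟨v, hvker, fun t ht => ?_⟩
  have key : ∀ i, ‖u i - v i‖ ≤ C⁻¹ * Real.exp (-(s * ω i)) * ‖Ph i (u i)‖ := by
    intro i
    set w := u i - v i with hw
    have hwmem : w ∈ (LinearMap.ker (Ph i))ᗮ :=
      Submodule.sub_starProjection_mem_orthogonal (K := LinearMap.ker (Ph i)) (u i)
    have hPw : Ph i w = Ph i (u i) := by
      simp [hw, map_sub, hvker i]
    by_cases h0 : w = 0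
    · simp [h0]
      positivity
    · have hwn : (0:ℝ) < ‖w‖ := norm_pos_iff.mpr h0
      set φ : E i := ((‖w‖ : ℂ))⁻¹ • w with hφ
      have hφmem : φ ∈ (LinearMap.ker (Ph i))ᗮ := Submodule.smul_mem _ _ hwmem
      have hφn : ‖φ‖ = 1 := by
        rw [hφ, norm_smul]
        simp [hwn.ne']
      have := hEst i φ hφmem hφn
      have hPφ : ‖Ph i φ‖ = ‖w‖⁻¹ * ‖Ph i w‖ := by
        rw [hφ, map_smul, norm_smul]
        simp
      rw [hPφ, hPw] at this
      rw [Real.exp_neg]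
      have hexp : (0:ℝ) < Real.exp (s * ω i) := Real.exp_pos _
      calc ‖w‖ = (C * Real.exp (s * ω i))⁻¹ * (C * Real.exp (s * ω i)) * ‖w‖ := by
            field_simp
        _ ≤ (C * Real.exp (s * ω i))⁻¹ * (‖w‖⁻¹ * ‖Ph i (u i)‖) * ‖w‖ := by
            apply mul_le_mul_of_nonneg_right _ hwn.le
            exact mul_le_mul_of_nonneg_left this (by positivity)
        _ = C⁻¹ * (Real.exp (s * ω i))⁻¹ * ‖Ph i (u i)‖ := by
            field_simp
  refine Summable.of_nonneg_of_le (fun i => by positivity)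
    (fun i => ?_) ((ht.mul_left (C⁻¹ ^ 2)) : Summable fun i =>
      C⁻¹ ^ 2 * (Real.exp (2 * t * ω i) * ‖pws E Ph u i‖ ^ 2))
  have hk := key i
  have h1 : ‖(u - v) i‖ ^ 2 ≤ (C⁻¹ * Real.exp (-(s * ω i)) * ‖Ph i (u i)‖) ^ 2 := by
    have h2 : ‖(u - v) i‖ = ‖u i - v i‖ := rfl
    nlinarith [norm_nonneg (u i - v i)]
  calc Real.exp (2 * (s + t) * ω i) * ‖(u - v) i‖ ^ 2
      ≤ Real.exp (2 * (s + t) * ω i) * (C⁻¹ * Real.exp (-(s * ω i)) * ‖Ph i (u i)‖) ^ 2 :=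
        mul_le_mul_of_nonneg_left h1 (Real.exp_pos _).le
    _ = C⁻¹ ^ 2 * (Real.exp (2 * t * ω i) * ‖pws E Ph u i‖ ^ 2) := by
        have hE : Real.exp (2 * (s + t) * ω i) * Real.exp (-(s * ω i)) ^ 2
            = Real.exp (2 * t * ω i) := by
          rw [sq, ← Real.exp_add, ← Real.exp_add]
          ring_nf
        rw [show pws E Ph u i = Ph i (u i) from rfl, mul_pow, mul_pow]
        linear_combination (C⁻¹ ^ 2 * ‖Ph i (u i)‖ ^ 2) * hE

lemma hard' (E : ι → Type*) [∀ i, NormedAddCommGroup (E i)]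
    [∀ i, InnerProductSpace ℂ (E i)] [∀ i, FiniteDimensional ℂ (E i)]
    {ω : ι → ℝ} (hω : ∀ i, 0 ≤ ω i) (Ph : ∀ i, E i →ₗ[ℂ] E i)
    {ρ : ℝ} (hρ : 0 < ρ) (hS : Summable fun i => Real.exp (-ρ * ω i))
    (hA : AGHEbeu E Ph ω) : ∃ s : ℝ, ∃ C > (0:ℝ), Est E Ph ω s C := by
  classical
  by_contra hne
  push_neg at hne
  have hbad : ∀ n : ℕ, ∃ i, ∃ φ : E i, φ ∈ (LinearMap.ker (Ph i))ᗮ ∧ ‖φ‖ = 1 ∧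
      ‖Ph i φ‖ < (1/((n:ℝ)+1)) * Real.exp (-(n:ℝ) * ω i) := by
    intro n
    have h := hne (-(n:ℝ)) (1/((n:ℝ)+1)) (by positivity)
    unfold Est at h
    push_neg at h
    obtain ⟨i, φ, h1, h2, h3⟩ := h
    exact ⟨i, φ, h1, h2, h3⟩
  choose idx φf hmem hnorm hlt using hbad
  -- minimal singular values
  have hsing : ∀ j, ∃ c > (0:ℝ), ∀ φ ∈ (LinearMap.ker (Ph j))ᗮ, ‖φ‖ = 1 → c ≤ ‖Ph j φ‖ := by
    intro j
    set K : Set (E j) := {φ | φ ∈ (LinearMap.ker (Ph j))ᗮ ∧ ‖φ‖ = 1} with hK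
    by_cases hKne : K.Nonempty
    · have hcl : IsClosed ((((LinearMap.ker (Ph j))ᗮ : Submodule ℂ (E j)) : Set (E j))) :=
        Submodule.closed_of_finiteDimensional _
      have hKeq : K = (((LinearMap.ker (Ph j))ᗮ : Submodule ℂ (E j)) : Set (E j))
          ∩ Metric.sphere 0 1 := by
        ext φ
        simp [hK, mem_sphere_iff_norm]
      have hcomp : IsCompact K := by
        rw [hKeq]
        exact ((isCompact_sphere (0 : E j) 1).inter_left hcl)
      obtain ⟨φ₀, hφ₀, hmin⟩ := hcomp.exists_isMinOn hKne
        (((Ph j).continuous_of_finiteDimensional).norm.continuousOn)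
      refine ⟨‖Ph j φ₀‖, ?_, fun φ h1 h2 => hmin (show φ ∈ K from ⟨h1, h2⟩)⟩
      rcases eq_or_ne (Ph j φ₀) 0 with h0 | h0
      · exfalso
        have hker : φ₀ ∈ LinearMap.ker (Ph j) := LinearMap.mem_ker.mpr h0
        have : (inner ℂ φ₀ φ₀ : ℂ) = 0 := Submodule.inner_right_of_mem_orthogonal hker hφ₀.1
        have : φ₀ = 0 := inner_self_eq_zero.mp this
        rw [this] at hφ₀
        simpa using hφ₀.2
      · exact norm_pos_iff.mpr h0
    · exact ⟨1, one_pos, fun φ h1 h2 => absurd (show φ ∈ K from ⟨h1, h2⟩)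
        (fun h => hKne ⟨φ, h⟩)⟩
  choose c hcpos hc using hsing
  -- finite fibers
  have hfib : ∀ j, {n : ℕ | idx n = j}.Finite := by
    intro j
    by_contra hinf
    rw [← Set.not_infinite, not_not] at hinf
    obtain ⟨N, hN⟩ := exists_nat_one_div_lt (hcpos j)
    obtain ⟨b, hb, hbN⟩ := hinf.exists_gt N
    have h1 : c (idx b) ≤ ‖Ph (idx b) (φf b)‖ := hc (idx b) (φf b) (hmem b) (hnorm b)
    have h2 := hlt b
    have h3 : Real.exp (-(b:ℝ) * ω (idx b)) ≤ 1 := by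
      rw [Real.exp_le_one_iff]
      have := hω (idx b)
      have : (0:ℝ) ≤ (b:ℝ) := Nat.cast_nonneg b
      nlinarith [hω (idx b)]
    have h4 : (1/((b:ℝ)+1)) ≤ 1/((N:ℝ)+1) := by
      apply one_div_le_one_div_of_le (by positivity)
      have : (N:ℝ) < (b:ℝ) := by exact_mod_cast hbN
      linarith
    have h5 : c j = c (idx b) := by rw [hb]
    have h6 : (1/((b:ℝ)+1)) * Real.exp (-(b:ℝ) * ω (idx b)) ≤ 1/((b:ℝ)+1) := by
      have := mul_le_mul_of_nonneg_left h3 (by positivity : (0:ℝ) ≤ 1/((b:ℝ)+1))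
      simpa using this
    linarith
  -- the function u
  set u : ∀ j, E j := fun j => if h : ∃ n, idx n = j then h.choose_spec ▸ φf h.choose else 0
    with hu
  have hcast : ∀ (j : ι) (n : ℕ) (e : idx n = j),
      ‖(e ▸ φf n : E j)‖ = 1 ∧ ‖Ph j (e ▸ φf n)‖ = ‖Ph (idx n) (φf n)‖ ∧
      ((e ▸ φf n : E j) ∈ (LinearMap.ker (Ph j))ᗮ) := by
    rintro j n rfl
    exact ⟨hnorm n, rfl, hmem n⟩
  have huj : ∀ (j : ι) (h : ∃ n, idx n = j), ‖u j‖ = 1 ∧ u j ∈ (LinearMap.ker (Ph j))ᗮ ∧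
      ‖Ph j (u j)‖ < (1/((h.choose:ℝ)+1)) * Real.exp (-(h.choose:ℝ) * ω j) := by
    intro j h
    have hcj := hcast j h.choose h.choose_spec
    have huval : u j = h.choose_spec ▸ φf h.choose := by rw [hu]; exact dif_pos h
    rw [huval]
    refine ⟨hcj.1, hcj.2.2, ?_⟩
    rw [hcj.2.1]
    have hωeq : ω (idx h.choose) = ω j := by rw [h.choose_spec]
    have := hlt h.choose
    rwa [hωeq] at this
  have huj0 : ∀ j : ι, ¬(∃ n, idx n = j) → u j = 0 := by
    intro j h
    rw [hu]; exact dif_neg h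
  -- (a) u ∈ Dbeu'
  have ha : u ∈ Dbeu' E ω := by
    refine ⟨ρ/2, by positivity, ?_⟩
    refine Summable.of_nonneg_of_le (fun j => by positivity) (fun j => ?_) hS
    have hle : ‖u j‖ ≤ 1 := by
      by_cases h : ∃ n, idx n = j
      · exact le_of_eq (huj j h).1
      · simp [huj0 j h]
    have h2 : ‖u j‖ ^ 2 ≤ 1 := by nlinarith [norm_nonneg (u j)]
    calc Real.exp (2 * -(ρ/2) * ω j) * ‖u j‖ ^ 2
        ≤ Real.exp (2 * -(ρ/2) * ω j) * 1 := mul_le_mul_of_nonneg_left h2 (Real.exp_pos _).le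
      _ = Real.exp (-ρ * ω j) := by rw [mul_one]; congr 1; ring
  -- (b) P u ∈ Dbeu
  have hbase : Summable (fun n : ℕ => (1/((n:ℝ)+1))^2) := by
    have h0 : Summable (fun n : ℕ => 1 / ((n:ℝ)) ^ 2) :=
      Real.summable_one_div_nat_pow.mpr one_lt_two
    have h1 := (summable_nat_add_iff 1).mpr h0
    refine h1.congr fun n => ?_
    push_cast
    rw [div_pow, one_pow]
  set g : ι → ℝ := fun j => if h : ∃ n, idx n = j then (1/((h.choose:ℝ)+1))^2 else 0 with hg
  have hgnn : ∀ j, 0 ≤ g j := by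
    intro j
    by_cases h : ∃ n, idx n = j
    · have hval : g j = (1/((h.choose:ℝ)+1))^2 := dif_pos h
      rw [hval]; positivity
    · have hval : g j = 0 := dif_neg h
      rw [hval]
  have hgsum : Summable g := by
    set s : Set ι := {j | ∃ n, idx n = j} with hs
    set e : s → ℕ := fun j => Exists.choose (show ∃ n, idx n = (j:ι) from j.2) with he_def
    have he : ∀ j : s, idx (e j) = (j : ι) :=
      fun j => Exists.choose_spec (show ∃ n, idx n = (j:ι) from j.2)
    have hginj : Function.Injective e := by
      intro a b hab
      apply Subtype.ext
      rw [← he a, ← he b, hab]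
    have hgval : ∀ j : s, g (j : ι) = (1/((e j : ℝ)+1))^2 :=
      fun j => dif_pos (show ∃ n, idx n = (j:ι) from j.2)
    have hgs : Summable (fun j : s => g (j : ι)) :=
      (hbase.comp_injective hginj).congr (fun j => (hgval j).symm)
    have hgsc : Summable (fun j : (sᶜ : Set ι) => g (j : ι)) := by
      have heq : (fun j : (sᶜ : Set ι) => g (j : ι)) = fun _ => 0 := by
        funext j
        exact dif_neg j.2
      rw [heq]
      exact summable_zero
    exact summable_subtype_and_compl.mp ⟨hgs, hgsc⟩
  have hb : pws E Ph u ∈ Dbeu E ω := by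
    intro t ht
    show Summable fun j => Real.exp (2 * t * ω j) * ‖pws E Ph u j‖ ^ 2
    set F : Finset ι := (Finset.range (⌈t⌉₊ + 1)).image idx with hF
    refine (Finset.summable_compl_iff F).mp ?_
    refine Summable.of_nonneg_of_le (fun x => by positivity) (fun x => ?_)
      (hgsum.comp_injective Subtype.val_injective)
    obtain ⟨j, hjF⟩ := x
    show Real.exp (2 * t * ω j) * ‖pws E Ph u j‖ ^ 2 ≤ g j
    by_cases h : ∃ n, idx n = j
    · obtain ⟨h1, h2, h3⟩ := huj j h
      set n := h.choose with hn
      have hnge : ⌈t⌉₊ + 1 ≤ n := by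
        by_contra hlt'
        push_neg at hlt'
        exact hjF (Finset.mem_image.mpr ⟨n, Finset.mem_range.mpr hlt', h.choose_spec⟩)
      have htn : t ≤ (n:ℝ) := by
        refine le_trans (Nat.le_ceil t) ?_
        exact_mod_cast Nat.le_of_succ_le hnge
      have hgj : g j = (1/((n:ℝ)+1))^2 := dif_pos h
      have hb1 : ‖Ph j (u j)‖ ^ 2 ≤ ((1/((n:ℝ)+1)) * Real.exp (-(n:ℝ) * ω j)) ^ 2 := by
        nlinarith [norm_nonneg (Ph j (u j))]
      have hE : Real.exp (2 * t * ω j) * Real.exp (-(n:ℝ) * ω j) ^ 2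
          = Real.exp ((2*t - 2*(n:ℝ)) * ω j) := by
        rw [sq, ← Real.exp_add, ← Real.exp_add]
        ring_nf
      have hEle : Real.exp ((2*t - 2*(n:ℝ)) * ω j) ≤ 1 := by
        rw [Real.exp_le_one_iff]
        have := hω j
        nlinarith
      calc Real.exp (2 * t * ω j) * ‖pws E Ph u j‖ ^ 2
          ≤ Real.exp (2 * t * ω j) * ((1/((n:ℝ)+1)) * Real.exp (-(n:ℝ) * ω j)) ^ 2 :=
            mul_le_mul_of_nonneg_left hb1 (Real.exp_pos _).le
        _ = (1/((n:ℝ)+1))^2 * Real.exp ((2*t - 2*(n:ℝ)) * ω j) := by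
            rw [mul_pow]
            linear_combination (1/((n:ℝ)+1))^2 * hE
        _ ≤ (1/((n:ℝ)+1))^2 * 1 := mul_le_mul_of_nonneg_left hEle (by positivity)
        _ = g j := by rw [mul_one, hgj]
    · have h0 : u j = 0 := huj0 j h
      have : pws E Ph u j = 0 := by
        show Ph j (u j) = 0
        rw [h0, map_zero]
      rw [this]
      simpa using hgnn j
  -- contradiction
  obtain ⟨v, hvker, hvD⟩ := hA u ha hb
  have h1 : u - v ∈ Dwt E ω 1 := hvD 1 one_pos
  have h2 : Filter.Tendsto (fun j => Real.exp (2 * 1 * ω j) * ‖(u - v) j‖ ^ 2)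
      Filter.cofinite (nhds 0) := h1.tendsto_cofinite_zero
  have hev : ∀ᶠ j in Filter.cofinite,
      Real.exp (2 * 1 * ω j) * ‖(u - v) j‖ ^ 2 < 1 := h2.eventually_lt_const one_pos
  rw [Filter.eventually_cofinite] at hev
  have hrsub : Set.range idx ⊆ {j | ¬ Real.exp (2 * 1 * ω j) * ‖(u - v) j‖ ^ 2 < 1} := by
    rintro j ⟨n, rfl⟩
    have h : ∃ m, idx m = idx n := ⟨n, rfl⟩
    obtain ⟨hn1, hn2, _⟩ := huj (idx n) h
    have hvk : v (idx n) ∈ LinearMap.ker (Ph (idx n)) := LinearMap.mem_ker.mpr (hvker (idx n))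
    have hinner : (inner ℂ (u (idx n)) (-(v (idx n))) : ℂ) = 0 := by
      rw [inner_neg_right, Submodule.inner_left_of_mem_orthogonal hvk hn2, neg_zero]
    have hpyth : ‖u (idx n) + -(v (idx n))‖ ^ 2 = ‖u (idx n)‖ ^ 2 + ‖v (idx n)‖ ^ 2 := by
      rw [sq, sq, sq, norm_add_sq_eq_norm_sq_add_norm_sq_of_inner_eq_zero _ _ hinner, norm_neg]
    have hsub : ‖(u - v) (idx n)‖ ^ 2 = ‖u (idx n)‖ ^ 2 + ‖v (idx n)‖ ^ 2 := by
      rw [show (u - v) (idx n) = u (idx n) + -(v (idx n)) by simp [sub_eq_add_neg]]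
      exact hpyth
    intro hcon
    have hexp : (1:ℝ) ≤ Real.exp (2 * 1 * ω (idx n)) := by
      rw [Real.one_le_exp_iff]
      nlinarith [hω (idx n)]
    rw [hsub, hn1] at hcon
    nlinarith [sq_nonneg ‖v (idx n)‖]
  have hrfin : (Set.range idx).Finite := hev.subset hrsub
  have : (Set.univ : Set ℕ).Finite := by
    have hun : (Set.univ : Set ℕ) ⊆ ⋃ j ∈ Set.range idx, {n : ℕ | idx n = j} := by
      intro n _
      exact Set.mem_biUnion ⟨n, rfl⟩ rfl
    exact ((hrfin.biUnion (fun j _ => hfib j)).subset hun)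
  exact Set.infinite_univ this

theorem statement_14 {ι : Type*} [Countable ι] (E : ι → Type*)
    [∀ i, NormedAddCommGroup (E i)] [∀ i, InnerProductSpace ℂ (E i)]
    [∀ i, FiniteDimensional ℂ (E i)]
    (ω : ι → ℝ) (hω : ∀ i, 0 ≤ ω i)
    (Ph : ∀ i, E i →ₗ[ℂ] E i) (hne : ∃ i, Ph i ≠ 0)
    (ρ : ℝ) (hρ : 0 < ρ) (hS : Summable fun i => Real.exp (-ρ * ω i)) :
    (AGHEbeu E Ph ω ↔ ∃ s : ℝ, ∃ C > (0 : ℝ), Est E Ph ω s C) ∧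
    (∀ s C : ℝ, 0 < C → Est E Ph ω s C →
      ∀ u : ∀ i, E i, ∃ v ∈ kerSet E Ph,
        (∀ t : ℝ, pws E Ph u ∈ Dwt E ω t → u - v ∈ Dwt E ω (s + t)) ∧
        (pws E Ph u ∈ Dbeu E ω → u - v ∈ Dbeu E ω)) := by
  constructor
  · constructor
    · exact fun hA => hard' E hω Ph hρ hS hA
    · rintro ⟨s, C, hC, hEst⟩ u hu hPu
      obtain ⟨v, hvker, hvt⟩ := part2' E Ph hC hEst u
      refine ⟨v, hvker, fun t' ht' => ?_⟩
      have h1 : pws E Ph u ∈ Dwt E ω (max (t' - s) 1) :=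
        hPu _ (lt_of_lt_of_le one_pos (le_max_right _ _))
      have h2 := hvt _ h1
      exact Dwt_mono' hω (by
        have := le_max_left (t' - s) 1
        linarith) h2
  · intro s C hC hEst u
    obtain ⟨v, hvker, hvt⟩ := part2' E Ph hC hEst u
    refine ⟨v, hvker, hvt, fun hPu t' ht' => ?_⟩
    have h1 : pws E Ph u ∈ Dwt E ω (max (t' - s) 1) :=
      hPu _ (lt_of_lt_of_le one_pos (le_max_right _ _))
    have h2 := hvt _ h1
    exact Dwt_mono' hω (by
      have := le_max_left (t' - s) 1
      linarith) h2
end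
end

section
/- Let P be nonzero and assume condition S(ρ) holds for every ρ > 0. Then P is AGHE_{{ω}} if and only if for every s < 0 there exists C > 0 such that the estimate E(s,C) holds. In that case, for every u ∈ Π there exists v ∈ ker P such that, for every t ∈ ℝ and every s < 0, P u ∈ D_{ω,t} implies u − v ∈ D_{ω,s+t}; in particular, if P u ∈ D_{{ω}} then u − v ∈ D_{{ω}}. -/
noncomputable section

variable {ι : Type*}

open scoped InnerProductSpace

private lemma aux_min (F : Type*) [NormedAddCommGroup F] [InnerProductSpace ℂ F]
    [FiniteDimensional ℂ F] (T : F →ₗ[ℂ] F) :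
    ∃ c > (0:ℝ), ∀ φ ∈ (LinearMap.ker T)ᗮ, ‖φ‖ = 1 → c ≤ ‖T φ‖ := by
  set S : Set F := {φ | φ ∈ (LinearMap.ker T)ᗮ ∧ ‖φ‖ = 1} with hSdef
  rcases S.eq_empty_or_nonempty with hS | hS
  · exact ⟨1, one_pos, fun φ h1 h2 =>
      absurd (Set.eq_empty_iff_forall_notMem.1 hS φ ⟨h1, h2⟩) (by simp)⟩
  · have hclosed : IsClosed S := by
      have h1 : IsClosed ((LinearMap.ker T)ᗮ : Set F) :=
        (LinearMap.ker T)ᗮ.closed_of_finiteDimensional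
      have h2 : IsClosed {φ : F | ‖φ‖ = 1} := isClosed_eq continuous_norm continuous_const
      exact h1.inter h2
    have hbdd : Bornology.IsBounded S := by
      apply Bornology.IsBounded.subset (Metric.isBounded_closedBall (x := (0:F)) (r := 1))
      intro φ hφ
      simp [Metric.mem_closedBall, hφ.2.le, dist_eq_norm, hφ.2]
    have hcpt : IsCompact S := Metric.isCompact_of_isClosed_isBounded hclosed hbdd
    have hcont : ContinuousOn (fun φ => ‖T φ‖) S :=
      (T.continuous_of_finiteDimensional.norm).continuousOn
    obtain ⟨φ₀, hφ₀S, hmin⟩ := hcpt.exists_isMinOn hS hcont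
    refine ⟨‖T φ₀‖, ?_, fun φ h1 h2 => hmin ⟨h1, h2⟩⟩
    rcases (norm_nonneg (T φ₀)).lt_or_eq with h | h
    · exact h
    · exfalso
      have hker : φ₀ ∈ LinearMap.ker T := by
        simpa [LinearMap.mem_ker] using (norm_eq_zero.1 h.symm)
      have h0 := Submodule.mem_orthogonal (LinearMap.ker T) φ₀ |>.1 hφ₀S.1 φ₀ hker
      have hz : φ₀ = 0 := by simpa using inner_self_eq_zero.1 h0
      have := hφ₀S.2
      rw [hz, norm_zero] at this
      exact one_ne_zero this.symm

private lemma aux_scale {F : Type*} [NormedAddCommGroup F] [InnerProductSpace ℂ F]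
    (T : F →ₗ[ℂ] F) (c : ℝ) (hc : ∀ φ ∈ (LinearMap.ker T)ᗮ, ‖φ‖ = 1 → c ≤ ‖T φ‖)
    (w : F) (hw : w ∈ (LinearMap.ker T)ᗮ) : c * ‖w‖ ≤ ‖T w‖ := by
  rcases eq_or_ne w 0 with rfl | hw0
  · simp
  · have hnw : ‖w‖ ≠ 0 := norm_ne_zero_iff.2 hw0
    have h1 : ((‖w‖:ℂ)⁻¹ • w) ∈ (LinearMap.ker T)ᗮ := Submodule.smul_mem _ _ hw
    have h2 : ‖(‖w‖:ℂ)⁻¹ • w‖ = 1 := by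
      rw [norm_smul]; simp [hnw]
    have := hc _ h1 h2
    rw [map_smul, norm_smul] at this
    simp only [norm_inv, Complex.norm_real, norm_norm] at this
    calc c * ‖w‖ ≤ (‖w‖⁻¹ * ‖T w‖) * ‖w‖ := by
          apply mul_le_mul_of_nonneg_right this (norm_nonneg _)
      _ = ‖T w‖ := by field_simp

private lemma aux_pyth {F : Type*} [NormedAddCommGroup F] [InnerProductSpace ℂ F]
    (T : F →ₗ[ℂ] F) (φ v : F) (hφ : φ ∈ (LinearMap.ker T)ᗮ) (hv : T v = 0)
    (h1 : ‖φ‖ = 1) : 1 ≤ ‖φ - v‖ ^ 2 := by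
  have h0 : ⟪v, φ⟫_ℂ = 0 :=
    (Submodule.mem_orthogonal (LinearMap.ker T) φ).1 hφ v (LinearMap.mem_ker.2 hv)
  have : ‖φ - v‖ ^ 2 = ‖φ‖ ^ 2 + ‖v‖ ^ 2 := by
    have h0' : ⟪φ, -v⟫_ℂ = 0 := by
      rw [inner_neg_right, ← inner_conj_symm, h0]; simp
    have := norm_add_sq_eq_norm_sq_add_norm_sq_of_inner_eq_zero φ (-v) h0'
    rw [sub_eq_add_neg]
    simpa [pow_two] using this
  nlinarith [norm_nonneg v, this]

theorem statement_15 {ι : Type*} [Countable ι] (E : ι → Type*)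
    [∀ i, NormedAddCommGroup (E i)] [∀ i, InnerProductSpace ℂ (E i)]
    [∀ i, FiniteDimensional ℂ (E i)]
    (ω : ι → ℝ) (hω : ∀ i, 0 ≤ ω i)
    (Ph : ∀ i, E i →ₗ[ℂ] E i) (hne : ∃ i, Ph i ≠ 0)
    (hS : ∀ ρ > (0 : ℝ), Summable fun i => Real.exp (-ρ * ω i)) :
    (AGHErou E Ph ω ↔ ∀ s < (0 : ℝ), ∃ C > (0 : ℝ), Est E Ph ω s C) ∧
    ((∀ s < (0 : ℝ), ∃ C > (0 : ℝ), Est E Ph ω s C) →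
      ∀ u : ∀ i, E i, ∃ v ∈ kerSet E Ph,
        (∀ t : ℝ, ∀ s < (0 : ℝ), pws E Ph u ∈ Dwt E ω t → u - v ∈ Dwt E ω (s + t)) ∧
        (pws E Ph u ∈ Drou E ω → u - v ∈ Drou E ω)) := by
  classical
  have key : (∀ s < (0 : ℝ), ∃ C > (0 : ℝ), Est E Ph ω s C) →
      ∀ u : ∀ i, E i, ∃ v ∈ kerSet E Ph,
        (∀ t : ℝ, ∀ s < (0 : ℝ), pws E Ph u ∈ Dwt E ω t → u - v ∈ Dwt E ω (s + t)) ∧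
        (pws E Ph u ∈ Drou E ω → u - v ∈ Drou E ω) := by
    intro hest u
    set v : ∀ i, E i := fun i => (Submodule.orthogonalProjection (LinearMap.ker (Ph i)) (u i) : E i)
      with hvdef
    have hvker : v ∈ kerSet E Ph := fun i =>
      LinearMap.mem_ker.1 (Submodule.orthogonalProjection (LinearMap.ker (Ph i)) (u i)).2
    have hw : ∀ i, u i - v i ∈ (LinearMap.ker (Ph i))ᗮ := fun i =>
      Submodule.sub_starProjection_mem_orthogonal (u i)
    have hPw : ∀ i, Ph i (u i - v i) = Ph i (u i) := by
      intro i
      rw [map_sub, hvker i, sub_zero]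
    have main : ∀ t : ℝ, ∀ s < (0 : ℝ), pws E Ph u ∈ Dwt E ω t → u - v ∈ Dwt E ω (s + t) := by
      intro t s hs hPu
      obtain ⟨C, hC, hE⟩ := hest s hs
      have hPu' : Summable fun i => C⁻¹ ^ 2 * (Real.exp (2 * t * ω i) * ‖Ph i (u i)‖ ^ 2) :=
        (hPu : Summable _).mul_left _
      refine Summable.of_nonneg_of_le (fun i => by positivity) (fun i => ?_) hPu'
      have hsc : C * Real.exp (s * ω i) * ‖u i - v i‖ ≤ ‖Ph i (u i)‖ := by
        rw [← hPw i]
        exact aux_scale (Ph i) _ (hE i) _ (hw i)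
      have hexp : Real.exp (2 * (s + t) * ω i) =
          Real.exp (s * ω i) ^ 2 * Real.exp (2 * t * ω i) := by
        rw [sq, ← Real.exp_add, ← Real.exp_add]; ring_nf
      have hnn : (0:ℝ) ≤ C * Real.exp (s * ω i) * ‖u i - v i‖ := by positivity
      have hsq : (C * Real.exp (s * ω i) * ‖u i - v i‖) ^ 2 ≤ ‖Ph i (u i)‖ ^ 2 :=
        pow_le_pow_left₀ hnn hsc 2
      rw [Pi.sub_apply, hexp]
      have h2 : Real.exp (s * ω i) ^ 2 * Real.exp (2 * t * ω i) * ‖u i - v i‖ ^ 2 =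
          C⁻¹ ^ 2 * (Real.exp (2 * t * ω i) * (C * Real.exp (s * ω i) * ‖u i - v i‖) ^ 2) := by
        field_simp
      rw [h2]
      apply mul_le_mul_of_nonneg_left _ (by positivity)
      exact mul_le_mul_of_nonneg_left hsq (Real.exp_pos _).le
    refine ⟨v, hvker, main, fun hPu => ?_⟩
    obtain ⟨t, ht, hPt⟩ := hPu
    refine ⟨t / 2, by linarith, ?_⟩
    have h := main t (-(t / 2)) (by linarith) hPt
    have heq : -(t / 2) + t = t / 2 := by ring
    rwa [heq] at h
  refine ⟨⟨?_, fun hest u _ hPu => by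
    obtain ⟨v, hv, _, h2⟩ := key hest u
    exact ⟨v, hv, h2 hPu⟩⟩, key⟩
  intro hA s hs
  by_contra hcon
  push_neg at hcon
  simp only [Est, not_forall, not_le, exists_prop] at hcon
  have hsel : ∀ n : ℕ, ∃ i, ∃ φ, φ ∈ (LinearMap.ker (Ph i))ᗮ ∧ ‖φ‖ = 1 ∧
      ‖Ph i φ‖ < (1 / (n + 1)) * Real.exp (s * ω i) := by
    intro n
    obtain ⟨i, φ, h1, h2, h3⟩ := hcon (1 / (n + 1)) (by positivity)
    exact ⟨i, φ, h1, h2, h3⟩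
  choose I Φ hΦmem hΦnorm hΦlt using hsel
  -- the range of I is infinite
  have hinf : (Set.range I).Infinite := by
    intro hfin
    haveI : Finite (Set.range I) := hfin.to_subtype
    obtain ⟨⟨i, hi⟩, hfib⟩ := Finite.exists_infinite_fiber (Set.rangeFactorization I)
    obtain ⟨c, hc0, hc⟩ := aux_min (E i) (Ph i)
    obtain ⟨N, hN⟩ := exists_nat_gt (1 / c)
    have hfib' : {n : ℕ | I n = i}.Infinite := by
      have heq : (Set.rangeFactorization I ⁻¹' {⟨i, hi⟩}) = {n | I n = i} := by
        ext n; simp [Set.rangeFactorization, Subtype.ext_iff]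
      rw [← heq]
      exact Set.infinite_coe_iff.1 hfib
    obtain ⟨n, hn_mem, hn_gt⟩ := hfib'.exists_gt N
    have hn_mem' : I n = i := hn_mem
    subst hn_mem'
    have hmem := hΦmem n
    have hlt := hΦlt n
    have h1 := hc (Φ n) hmem (hΦnorm n)
    have hexp : Real.exp (s * ω (I n)) ≤ 1 :=
      Real.exp_le_one_iff.2 (mul_nonpos_of_nonpos_of_nonneg hs.le (hω (I n)))
    have hn1 : (1:ℝ) / (n + 1) < c := by
      rw [div_lt_iff₀ (by positivity)]
      have h3 : (N : ℝ) < (n : ℝ) + 1 := by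
        have : (N : ℝ) ≤ n := Nat.cast_le.2 hn_gt.le
        linarith
      have := hN
      rw [div_lt_iff₀ hc0] at this
      nlinarith
    have hpos : (0:ℝ) < 1 / ((n:ℝ) + 1) := by positivity
    nlinarith
  -- construct u
  set Good : ι → Prop := fun i => ∃ φ, φ ∈ (LinearMap.ker (Ph i))ᗮ ∧ ‖φ‖ = 1 ∧
      ‖Ph i φ‖ ≤ Real.exp (s * ω i) with hGdef
  have hGood : ∀ n, Good (I n) := by
    intro n
    refine ⟨Φ n, hΦmem n, hΦnorm n, ?_⟩
    have hlt := hΦlt n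
    have hexp : (0:ℝ) < Real.exp (s * ω (I n)) := Real.exp_pos _
    have h1 : (1:ℝ) / ((n:ℝ) + 1) ≤ 1 := by
      rw [div_le_one (by positivity)]
      have : (0:ℝ) ≤ (n : ℝ) := Nat.cast_nonneg _
      linarith
    nlinarith
  have hGrange : ∀ i ∈ Set.range I, Good i := by
    rintro i ⟨n, rfl⟩
    exact hGood n
  set u : ∀ i, E i := fun i => if h : Good i then h.choose else 0 with hudef
  have hu_range : ∀ i, Good i →
      u i ∈ (LinearMap.ker (Ph i))ᗮ ∧ ‖u i‖ = 1 ∧ ‖Ph i (u i)‖ ≤ Real.exp (s * ω i) := by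
    intro i h
    have hu : u i = h.choose := dif_pos h
    rw [hu]
    exact h.choose_spec
  have hu_zero : ∀ i, ¬ Good i → u i = 0 := fun i h => dif_neg h
  have hu_norm : ∀ i, ‖u i‖ ≤ 1 := by
    intro i
    by_cases h : Good i
    · exact (hu_range i h).2.1.le
    · rw [hu_zero i h, norm_zero]; exact zero_le_one
  -- u ∈ Drou'
  have hu_rou' : u ∈ Drou' E ω := by
    intro t ht
    refine Summable.of_nonneg_of_le (fun i => by positivity) (fun i => ?_)
      ((hS (2 * t) (by linarith)).congr (fun i => ?_) :
        Summable fun i => Real.exp (2 * (-t) * ω i))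
    · have hsq : ‖u i‖ ^ 2 ≤ 1 := by
        have := hu_norm i
        nlinarith [norm_nonneg (u i)]
      have := mul_le_of_le_one_right (Real.exp_pos (2 * (-t) * ω i)).le hsq
      exact this
    · congr 1; ring
  -- P u ∈ Drou
  have hPu_rou : pws E Ph u ∈ Drou E ω := by
    refine ⟨-s / 2, by linarith, ?_⟩
    refine Summable.of_nonneg_of_le (fun i => by positivity) (fun i => ?_)
      ((hS (-s) (by linarith)).congr (fun i => ?_) :
        Summable fun i => Real.exp (s * ω i))
    · show Real.exp (2 * (-s / 2) * ω i) * ‖Ph i (u i)‖ ^ 2 ≤ Real.exp (s * ω i)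
      by_cases h : Good i
      · have hb := (hu_range i h).2.2
        calc Real.exp (2 * (-s / 2) * ω i) * ‖Ph i (u i)‖ ^ 2
            ≤ Real.exp (2 * (-s / 2) * ω i) * Real.exp (s * ω i) ^ 2 := by
              apply mul_le_mul_of_nonneg_left _ (Real.exp_pos _).le
              exact pow_le_pow_left₀ (norm_nonneg _) hb 2
          _ = Real.exp (s * ω i) := by
              rw [sq, ← Real.exp_add, ← Real.exp_add]; congr 1; ring
      · rw [hu_zero i h]
        simp [Real.exp_nonneg]
    · congr 1; ring
  obtain ⟨v, hv, t, ht, hsum⟩ := hA u hu_rou' hPu_rou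
  have hg1 : ∀ i, Good i → (1:ℝ) ≤ Real.exp (2 * t * ω i) * ‖(u - v) i‖ ^ 2 := by
    intro i h
    obtain ⟨hmem, hnorm, _⟩ := hu_range i h
    have hp := aux_pyth (Ph i) (u i) (v i) hmem (hv i) hnorm
    have he : (1:ℝ) ≤ Real.exp (2 * t * ω i) :=
      Real.one_le_exp (mul_nonneg (by linarith) (hω i))
    have : (u - v) i = u i - v i := rfl
    rw [this]
    nlinarith
  have hfin : {i | ¬ Real.exp (2 * t * ω i) * ‖(u - v) i‖ ^ 2 < 1}.Finite :=
    Filter.eventually_cofinite.1 (hsum.tendsto_cofinite_zero.eventually (gt_mem_nhds one_pos))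
  exact hinf (hfin.subset fun i hi => not_lt.2 (hg1 i (hGrange i hi)))
end
end

section
/- Assume condition S(ρ) holds for every ρ > 0 and let P be nonzero. If P is AGHE_{{ω}}, then P is AGHE_{(ω)}. -/
noncomputable section

variable {ι : Type*}

section AuxProof

variable {ι : Type*}

private lemma sigma_pos {F : Type*} [NormedAddCommGroup F] [InnerProductSpace ℂ F]
    [FiniteDimensional ℂ F] (T : F →ₗ[ℂ] F) :
    ∃ c > 0, ∀ φ ∈ (LinearMap.ker T)ᗮ, ‖φ‖ = 1 → c ≤ ‖T φ‖ := by
  classical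
  set A : Set F := ((LinearMap.ker T)ᗮ : Set F) ∩ Metric.sphere (0 : F) 1 with hA
  by_cases hne : A.Nonempty
  · have hcomp : IsCompact A :=
      (isCompact_sphere (0 : F) 1).inter_left (Submodule.closed_of_finiteDimensional _)
    obtain ⟨φ₀, hφ₀, hmin⟩ := hcomp.exists_isMinOn hne
      ((T.continuous_of_finiteDimensional.norm).continuousOn)
    refine ⟨‖T φ₀‖, ?_, ?_⟩
    · rw [gt_iff_lt, norm_pos_iff]
      intro h0
      have hk : φ₀ ∈ LinearMap.ker T := LinearMap.mem_ker.2 h0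
      have hz : φ₀ = 0 := by
        have := (Submodule.orthogonal_disjoint (LinearMap.ker T)).le_bot
          (Submodule.mem_inf.2 ⟨hk, hφ₀.1⟩)
        simpa using this
      have h1 : ‖φ₀‖ = 1 := by
        have := hφ₀.2
        simpa [mem_sphere_zero_iff_norm] using this
      rw [hz] at h1
      simp at h1
    · intro φ hm hn
      exact hmin ⟨hm, mem_sphere_zero_iff_norm.2 hn⟩
  · refine ⟨1, one_pos, fun φ hm hn => absurd ⟨φ, hm, mem_sphere_zero_iff_norm.2 hn⟩ hne⟩

private def trE (E : ι → Type*) {a b : ι} (h : a = b) (x : E a) : E b := h ▸ x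

private lemma trE_norm (E : ι → Type*) [∀ i, NormedAddCommGroup (E i)] {a b : ι}
    (h : a = b) (x : E a) : ‖trE E h x‖ = ‖x‖ := by subst h; rfl

private lemma trE_Ph (E : ι → Type*) [∀ i, NormedAddCommGroup (E i)]
    [∀ i, InnerProductSpace ℂ (E i)] (Ph : ∀ i, E i →ₗ[ℂ] E i) {a b : ι} (h : a = b)
    (x : E a) : Ph b (trE E h x) = trE E h (Ph a x) := by subst h; rfl

private lemma trE_mem (E : ι → Type*) [∀ i, NormedAddCommGroup (E i)]
    [∀ i, InnerProductSpace ℂ (E i)] (S : ∀ i, Submodule ℂ (E i)) {a b : ι} (h : a = b)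
    {x : E a} (hx : x ∈ S a) : trE E h x ∈ S b := by subst h; exact hx

private lemma exp_sq (z : ℝ) : Real.exp z ^ 2 = Real.exp (2 * z) := by
  rw [pow_two, ← Real.exp_add, two_mul]

end AuxProof

theorem statement_16 {ι : Type*} [Countable ι] (E : ι → Type*)
    [∀ i, NormedAddCommGroup (E i)] [∀ i, InnerProductSpace ℂ (E i)]
    [∀ i, FiniteDimensional ℂ (E i)]
    (ω : ι → ℝ) (hω : ∀ i, 0 ≤ ω i)
    (Ph : ∀ i, E i →ₗ[ℂ] E i) (hne : ∃ i, Ph i ≠ 0)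
    (hS : ∀ ρ > (0 : ℝ), Summable fun i => Real.exp (-ρ * ω i)) :
    AGHErou E Ph ω → AGHEbeu E Ph ω := by
  classical
  intro hR
  have hsig : ∀ i, ∃ c > 0, ∀ φ ∈ (LinearMap.ker (Ph i))ᗮ, ‖φ‖ = 1 → c ≤ ‖Ph i φ‖ :=
    fun i => sigma_pos (Ph i)
  choose σ hσpos hσ using hsig
  -- Step 1 : the a priori estimate
  have hEst : ∃ m : ℕ, Est E Ph ω (-((m : ℝ) + 1)) (Real.exp (-((m : ℝ) + 1))) := by
    by_contra hcon
    push_neg at hcon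
    have hsel : ∀ m : ℕ, ∃ i, ∃ φ ∈ (LinearMap.ker (Ph i))ᗮ, ‖φ‖ = 1 ∧
        ‖Ph i φ‖ < Real.exp (-((m : ℝ) + 1)) * Real.exp ((-((m : ℝ) + 1)) * ω i) := by
      intro m
      have h := hcon m
      unfold Est at h
      push_neg at h
      exact h
    choose idx φf hmem hnorm hlt using hsel
    have hσlt : ∀ m : ℕ, σ (idx m) < Real.exp (-((m : ℝ) + 1)) := by
      intro m
      have h1 := hσ (idx m) (φf m) (hmem m) (hnorm m)
      have h2 : Real.exp ((-((m : ℝ) + 1)) * ω (idx m)) ≤ 1 := by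
        apply Real.exp_le_one_iff.2
        have hm : (0 : ℝ) ≤ (m : ℝ) + 1 := by positivity
        have := hω (idx m)
        nlinarith
      calc σ (idx m) ≤ ‖Ph (idx m) (φf m)‖ := h1
        _ < Real.exp (-((m : ℝ) + 1)) * Real.exp ((-((m : ℝ) + 1)) * ω (idx m)) := hlt m
        _ ≤ Real.exp (-((m : ℝ) + 1)) * 1 :=
            mul_le_mul_of_nonneg_left h2 (Real.exp_pos _).le
        _ = Real.exp (-((m : ℝ) + 1)) := mul_one _
    -- the range of idx is infinite
    have hrange : (Set.range idx).Infinite := by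
      by_contra hfin
      rw [Set.not_infinite] at hfin
      obtain ⟨j0, hj0, hj0min⟩ := Set.exists_min_image (Set.range idx) σ hfin ⟨idx 0, 0, rfl⟩
      have htend : Filter.Tendsto (fun m : ℕ => Real.exp (-((m : ℝ) + 1))) Filter.atTop (nhds 0) := by
        have h1 : Filter.Tendsto (fun m : ℕ => (m : ℝ) + 1) Filter.atTop Filter.atTop :=
          Filter.tendsto_atTop_add_const_right _ 1 tendsto_natCast_atTop_atTop
        exact Real.tendsto_exp_neg_atTop_nhds_zero.comp h1
      obtain ⟨M, hM⟩ := Filter.eventually_atTop.1 (htend.eventually_lt_const (hσpos j0))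
      have h1 : σ j0 ≤ σ (idx M) := hj0min _ ⟨M, rfl⟩
      have h2 := hσlt M
      have h3 := hM M le_rfl
      linarith
    -- construct the counterexample u
    set u : ∀ j, E j := fun j =>
      if h : ∃ m, idx m = j then trE E (Nat.find_spec h) (φf (Nat.find h)) else 0 with hu_def
    set N : ι → ℕ := fun j => if h : ∃ m, idx m = j then Nat.find h else 0 with hN_def
    have hNidx : ∀ j (h : ∃ m, idx m = j), idx (N j) = j := by
      intro j h
      simp only [hN_def, dif_pos h]
      exact Nat.find_spec h
    have hu_pos : ∀ j (h : ∃ m, idx m = j),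
        u j = trE E (Nat.find_spec h) (φf (Nat.find h)) := by
      intro j h
      simp only [hu_def, dif_pos h]
    have hu_neg : ∀ j, ¬ (∃ m, idx m = j) → u j = 0 := by
      intro j h
      simp only [hu_def, dif_neg h]
    have hu_norm : ∀ j, (∃ m, idx m = j) → ‖u j‖ = 1 := by
      intro j h
      rw [hu_pos j h, trE_norm]
      exact hnorm _
    have hu_mem : ∀ j (h : ∃ m, idx m = j), u j ∈ (LinearMap.ker (Ph j))ᗮ := by
      intro j h
      rw [hu_pos j h]
      exact trE_mem E (fun i => (LinearMap.ker (Ph i))ᗮ) _ (hmem _)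
    have hu_Ph : ∀ j (h : ∃ m, idx m = j),
        ‖Ph j (u j)‖ < Real.exp (-((N j : ℝ) + 1)) * Real.exp ((-((N j : ℝ) + 1)) * ω j) := by
      intro j h
      rw [hu_pos j h, trE_Ph, trE_norm]
      have heq : N j = Nat.find h := by simp only [hN_def, dif_pos h]
      have hωeq : ω (idx (Nat.find h)) = ω j := congrArg ω (Nat.find_spec h)
      rw [heq, ← hωeq]
      exact hlt _
    -- u ∈ Drou'
    have hu1 : u ∈ Drou' E ω := by
      intro t ht
      have hb := hS (2 * t) (by linarith)
      refine Summable.of_nonneg_of_le (fun j => by positivity) (fun j => ?_) hb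
      by_cases h : ∃ m, idx m = j
      · rw [hu_norm j h]
        have : (2 : ℝ) * -t * ω j = -(2 * t) * ω j := by ring
        rw [this, one_pow, mul_one]
      · rw [hu_neg j h]
        simp [Real.exp_nonneg]
    -- P u ∈ Drou
    have hu2 : pws E Ph u ∈ Drou E ω := by
      refine ⟨1, one_pos, ?_⟩
      have hg : Summable (fun m : ℕ => Real.exp (-(2 : ℝ) * ((m : ℝ) + 1))) := by
        have h0 : Summable (fun m : ℕ => Real.exp (-2 : ℝ) ^ (m + 1)) := by
          apply Summable.comp_injective (f := fun m : ℕ => Real.exp (-2 : ℝ) ^ m)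
            (i := fun m : ℕ => m + 1)
          · exact summable_geometric_of_lt_one (Real.exp_nonneg _)
              (Real.exp_lt_one_iff.2 (by norm_num))
          · exact add_left_injective 1
        refine h0.congr fun m => ?_
        rw [← Real.exp_nat_mul]
        push_cast
        ring_nf
      set B : ι → ℝ := (Set.range idx).indicator
        (fun j => Real.exp (-(2 : ℝ) * ((N j : ℝ) + 1))) with hB_def
      have hB : Summable B := by
        rw [← summable_subtype_iff_indicator]
        have hinj : Function.Injective (fun j : Set.range idx => N (j : ι)) := by
          rintro ⟨j1, hj1⟩ ⟨j2, hj2⟩ hNeq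
          have e1 : idx (N j1) = j1 := hNidx j1 hj1
          have e2 : idx (N j2) = j2 := hNidx j2 hj2
          simp only at hNeq
          apply Subtype.ext
          simp only
          rw [← e1, ← e2, hNeq]
        exact hg.comp_injective hinj
      refine Summable.of_nonneg_of_le (fun j => by positivity) (fun j => ?_) hB
      by_cases h : ∃ m, idx m = j
      · have hjr : j ∈ Set.range idx := h
        rw [hB_def, Set.indicator_of_mem hjr]
        have hA0 : (0 : ℝ) ≤ ‖Ph j (u j)‖ := norm_nonneg _
        have hlt' := hu_Ph j h
        have h2 : ‖Ph j (u j)‖ ^ 2 ≤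
            (Real.exp (-((N j : ℝ) + 1)) * Real.exp ((-((N j : ℝ) + 1)) * ω j)) ^ 2 :=
          pow_le_pow_left₀ hA0 hlt'.le 2
        have hy : (0 : ℝ) ≤ ω j := hω j
        have hm : (0 : ℝ) ≤ (N j : ℝ) := Nat.cast_nonneg _
        calc Real.exp (2 * 1 * ω j) * ‖(pws E Ph u) j‖ ^ 2
            ≤ Real.exp (2 * 1 * ω j) *
              (Real.exp (-((N j : ℝ) + 1)) * Real.exp ((-((N j : ℝ) + 1)) * ω j)) ^ 2 :=
              mul_le_mul_of_nonneg_left h2 (Real.exp_pos _).le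
          _ = Real.exp (2 * 1 * ω j + (2 * (-((N j : ℝ) + 1)) + 2 * ((-((N j : ℝ) + 1)) * ω j))) := by
              rw [mul_pow, exp_sq, exp_sq, ← Real.exp_add, ← Real.exp_add]
          _ ≤ Real.exp (-(2 : ℝ) * ((N j : ℝ) + 1)) := by
              apply Real.exp_le_exp.2
              nlinarith [mul_nonneg hm hy]
      · have hjr : j ∉ Set.range idx := h
        rw [hB_def, Set.indicator_of_notMem hjr]
        have : (pws E Ph u) j = 0 := by
          show Ph j (u j) = 0
          rw [hu_neg j h, map_zero]
        rw [this]
        simp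
    -- apply AGHErou and derive a contradiction
    obtain ⟨v, hv, t, ht, hsum⟩ := hR u hu1 hu2
    have hone : ∀ j ∈ Set.range idx, (1 : ℝ) ≤ Real.exp (2 * t * ω j) * ‖(u - v) j‖ ^ 2 := by
      intro j hj
      have h1 : (1 : ℝ) ≤ ‖(u - v) j‖ := by
        have huv : (u - v) j = u j - v j := rfl
        have hinner : (inner ℂ (u j) ((u - v) j) : ℂ) = 1 := by
          rw [huv, inner_sub_right]
          have hz : (inner ℂ (u j) (v j) : ℂ) = 0 :=
            Submodule.inner_left_of_mem_orthogonal (LinearMap.mem_ker.2 (hv j)) (hu_mem j hj)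
          rw [hz, inner_self_eq_norm_sq_to_K, hu_norm j hj]
          norm_num
        have hcs := norm_inner_le_norm (𝕜 := ℂ) (u j) ((u - v) j)
        rw [hinner, hu_norm j hj, one_mul] at hcs
        simpa using hcs
      have h2 : (1 : ℝ) ≤ Real.exp (2 * t * ω j) := by
        apply Real.one_le_exp
        have := hω j
        positivity
      nlinarith
    have hfin : {j | (1 : ℝ) ≤ Real.exp (2 * t * ω j) * ‖(u - v) j‖ ^ 2}.Finite := by
      have h0 := hsum.tendsto_cofinite_zero
      have h1 := h0.eventually_lt_const (show (0 : ℝ) < 1 by norm_num)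
      rw [Filter.eventually_cofinite] at h1
      apply h1.subset
      intro j hj
      simp only [Set.mem_setOf_eq] at hj ⊢
      linarith
    exact hrange (hfin.subset hone)
  -- Step 2 : from the estimate to AGHEbeu
  obtain ⟨m, hest⟩ := hEst
  intro u _hu hPu
  set v : ∀ j, E j := fun j =>
    ((Submodule.orthogonalProjection (LinearMap.ker (Ph j)) (u j) : LinearMap.ker (Ph j)) : E j) with hv_def
  have hvker : v ∈ kerSet E Ph := fun j =>
    LinearMap.mem_ker.1 (Submodule.orthogonalProjection (LinearMap.ker (Ph j)) (u j)).2
  refine ⟨v, hvker, ?_⟩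
  intro t ht
  -- key pointwise estimate
  have key : ∀ j, ‖u j - v j‖ ≤
      Real.exp (((m : ℝ) + 1) * ω j) * Real.exp ((m : ℝ) + 1) * ‖Ph j (u j)‖ := by
    intro j
    have hw : u j - v j ∈ (LinearMap.ker (Ph j))ᗮ :=
      Submodule.sub_starProjection_mem_orthogonal (K := LinearMap.ker (Ph j)) (u j)
    by_cases h0 : u j - v j = 0
    · rw [h0]
      simp only [norm_zero]
      positivity
    · have hwpos : 0 < ‖u j - v j‖ := norm_pos_iff.2 h0
      set w := u j - v j with hw_def
      have hφmem : ((‖w‖⁻¹ : ℂ) • w) ∈ (LinearMap.ker (Ph j))ᗮ :=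
        Submodule.smul_mem _ _ hw
      have hφnorm : ‖(‖w‖⁻¹ : ℂ) • w‖ = 1 := norm_smul_inv_norm h0
      have hest' := hest j _ hφmem hφnorm
      have hPhw : Ph j w = Ph j (u j) := by
        rw [hw_def, map_sub, LinearMap.mem_ker.1 (hvker j), sub_zero]
      have hsmul : ‖Ph j ((‖w‖⁻¹ : ℂ) • w)‖ = ‖w‖⁻¹ * ‖Ph j (u j)‖ := by
        rw [map_smul, norm_smul, hPhw]
        simp [abs_of_nonneg (inv_nonneg.2 (norm_nonneg w))]
      rw [hsmul] at hest'
      have hcpos : (0 : ℝ) <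
          Real.exp (-((m : ℝ) + 1)) * Real.exp ((-((m : ℝ) + 1)) * ω j) := by positivity
      have h1 : ‖w‖ * (Real.exp (-((m : ℝ) + 1)) * Real.exp ((-((m : ℝ) + 1)) * ω j)) ≤
          ‖Ph j (u j)‖ := by
        have h := mul_le_mul_of_nonneg_left hest' hwpos.le
        have hc : ‖w‖ * (‖w‖⁻¹ * ‖Ph j (u j)‖) = ‖Ph j (u j)‖ := by
          field_simp
        rw [hc] at h
        exact h
      have hinv : (Real.exp (-((m : ℝ) + 1)) * Real.exp ((-((m : ℝ) + 1)) * ω j))⁻¹ =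
          Real.exp (((m : ℝ) + 1) * ω j) * Real.exp ((m : ℝ) + 1) := by
        rw [mul_inv, ← Real.exp_neg, ← Real.exp_neg]
        ring_nf
      calc ‖w‖ = ‖w‖ * (Real.exp (-((m : ℝ) + 1)) * Real.exp ((-((m : ℝ) + 1)) * ω j)) *
            (Real.exp (-((m : ℝ) + 1)) * Real.exp ((-((m : ℝ) + 1)) * ω j))⁻¹ := by
            rw [mul_assoc, mul_inv_cancel₀ hcpos.ne', mul_one]
        _ ≤ ‖Ph j (u j)‖ * (Real.exp (-((m : ℝ) + 1)) * Real.exp ((-((m : ℝ) + 1)) * ω j))⁻¹ :=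
            mul_le_mul_of_nonneg_right h1 (inv_nonneg.2 hcpos.le)
        _ = Real.exp (((m : ℝ) + 1) * ω j) * Real.exp ((m : ℝ) + 1) * ‖Ph j (u j)‖ := by
            rw [hinv]; ring
  -- conclude summability
  have hPsum := hPu (t + ((m : ℝ) + 1)) (by positivity)
  have hPsum' : Summable (fun j => Real.exp (2 * ((m : ℝ) + 1)) *
      (Real.exp (2 * (t + ((m : ℝ) + 1)) * ω j) * ‖(pws E Ph u) j‖ ^ 2)) :=
    hPsum.mul_left _
  refine Summable.of_nonneg_of_le (fun j => by positivity) (fun j => ?_) hPsum'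
  have huv : (u - v) j = u j - v j := rfl
  have hK := key j
  have h2 : ‖u j - v j‖ ^ 2 ≤
      (Real.exp (((m : ℝ) + 1) * ω j) * Real.exp ((m : ℝ) + 1) * ‖Ph j (u j)‖) ^ 2 :=
    pow_le_pow_left₀ (norm_nonneg _) hK 2
  calc Real.exp (2 * t * ω j) * ‖(u - v) j‖ ^ 2
      ≤ Real.exp (2 * t * ω j) *
        (Real.exp (((m : ℝ) + 1) * ω j) * Real.exp ((m : ℝ) + 1) * ‖Ph j (u j)‖) ^ 2 := by
        rw [huv]
        exact mul_le_mul_of_nonneg_left h2 (Real.exp_pos _).le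
    _ = Real.exp (2 * ((m : ℝ) + 1)) *
        (Real.exp (2 * (t + ((m : ℝ) + 1)) * ω j) * ‖(pws E Ph u) j‖ ^ 2) := by
        have hps : (pws E Ph u) j = Ph j (u j) := rfl
        rw [hps, mul_pow, mul_pow, exp_sq, exp_sq,
          show 2 * (t + ((m : ℝ) + 1)) * ω j = 2 * t * ω j + 2 * (((m : ℝ) + 1) * ω j) by ring,
          Real.exp_add]
        ring
end
end
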